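/- arXiv:0911.3602 — 6 statements merged into one kernel-verified Lean document; each statement's English description precedes it below -/
import Mathlib

section
/- For every equivariant n-cochain f on (A,H), one has A(b'f) = b(A f), where on the left-hand side A denotes the cyclic antisymmetrizer on (n+1)-cochains and on the right-hand side the cyclic antisymmetrizer on n-cochains; that is, A ∘ b' = b ∘ A on equivariant cochains. -/
/-!
Write `b' = Σ_{j ≤ n} (-1)ʲ ∂ⱼ` and `b = Σ_{j ≤ n+1} (-1)ʲ ∂ⱼ`, where `∂_{n+1}` is the twisted
face `f((h⁻¹·aⁿ⁺¹)a⁰, a¹, …, aⁿ | h)`. The cyclic operators satisfy `λ ∂₀ = ∂_{n+1}` and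
`λ ∂_{j+1} = ∂ⱼ λ` (for `j = n` because `h⁻¹` acts multiplicatively), hence
`λᵏ ∂ⱼ = ∂_{j-k} λᵏ` for `k ≤ j` and `λᵏ ∂ⱼ = ∂_{n+2+j-k} λᵏ⁻¹` for `j < k`. In the double sum
for `A(b'f)` this carries the index pairs `(k, j)` bijectively onto the pairs `(i, m)` of the double
sum `Σ (-1)^{i+nm} ∂ᵢ λᵐ f = b(Af)`, and the signs match.
-/

open scoped BigOperators

namespace EquivCyclic

noncomputable section

/-- An `n`-cochain on `(A, H)`: an `(n+1)`-ary map from `A` to the space of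
complex-valued functions on `H`.  Multilinearity is imposed separately. -/
abbrev Cochain (A H : Type*) (n : ℕ) : Type _ := (Fin (n + 1) → A) → H → ℂ

variable {A H : Type*} [Ring A] [Algebra ℂ A] [Group H]

/-- `f` is `(n+1)`-linear over `ℂ`. -/
def IsMultilinear (n : ℕ) (f : Cochain A H n) : Prop :=
  ∀ (a : Fin (n + 1) → A) (i : Fin (n + 1)) (h : H),
    (∀ x y : A,
      f (Function.update a i (x + y)) h =
        f (Function.update a i x) h + f (Function.update a i y) h) ∧
    (∀ (c : ℂ) (x : A),
      f (Function.update a i (c • x)) h = c * f (Function.update a i x) h)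

/-- `act` is an action of the group `H` on `A` by (complex) algebra
automorphisms. -/
def IsAlgAction (act : H → A → A) : Prop :=
  (∀ x : A, act 1 x = x) ∧
  (∀ (g h : H) (x : A), act (g * h) x = act g (act h x)) ∧
  (∀ (h : H) (x y : A), act h (x + y) = act h x + act h y) ∧
  (∀ (h : H) (x y : A), act h (x * y) = act h x * act h y) ∧
  (∀ (h : H) (c : ℂ) (x : A), act h (c • x) = c • act h x)

/-- Equivariance of a cochain:
`f(h·a⁰, …, h·aⁿ)(h g h⁻¹) = f(a⁰, …, aⁿ)(g)`. -/
def IsEquivariant (act : H → A → A) (n : ℕ) (f : Cochain A H n) : Prop :=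
  ∀ (g h : H) (a : Fin (n + 1) → A),
    f (fun i => act h (a i)) (h * g * h⁻¹) = f a g

/-- An equivariant `n`-cochain on `(A, H)`: an `(n+1)`-linear map satisfying
the equivariance condition. -/
def IsEquivCochain (act : H → A → A) (n : ℕ) (f : Cochain A H n) : Prop :=
  IsMultilinear n f ∧ IsEquivariant act n f

/-- The operator `b'`:
`(b'f)(a⁰,…,aⁿ⁺¹|h) = Σ_{j=0}^{n} (−1)^j f(a⁰,…,aʲaʲ⁺¹,…,aⁿ⁺¹|h)`. -/
def bPrime (n : ℕ) (f : Cochain A H n) : Cochain A H (n + 1) :=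
  fun a h =>
    ∑ j : Fin (n + 1),
      (-1 : ℂ) ^ (j : ℕ) *
        f (fun i =>
            if (i : ℕ) < (j : ℕ) then a i.castSucc
            else if (i : ℕ) = (j : ℕ) then a i.castSucc * a i.succ
            else a i.succ) h

/-- The equivariant Hochschild differential `b`:
`(bf)(a⁰,…,aⁿ⁺¹|h) = (b'f)(a⁰,…,aⁿ⁺¹|h) + (−1)^{n+1} f((h⁻¹·aⁿ⁺¹)a⁰, a¹,…,aⁿ|h)`. -/
def bOp (act : H → A → A) (n : ℕ) (f : Cochain A H n) : Cochain A H (n + 1) :=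
  fun a h =>
    bPrime n f a h +
      (-1 : ℂ) ^ (n + 1) *
        f (fun i =>
            if (i : ℕ) = 0 then act h⁻¹ (a (Fin.last (n + 1))) * a 0
            else a i.castSucc) h

/-- The equivariant cyclic permutation `λ_H^*`:
`(λ_H^* f)(a⁰,…,aⁿ|h) = f(h⁻¹·aⁿ, a⁰,…,aⁿ⁻¹|h)`. -/
def lamOp (act : H → A → A) (n : ℕ) (f : Cochain A H n) : Cochain A H n :=
  fun a h =>
    f (fun i =>
        if (i : ℕ) = 0 then act h⁻¹ (a (Fin.last n))
        else a ⟨(i : ℕ) - 1, lt_of_le_of_lt (Nat.sub_le _ _) i.isLt⟩) h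

/-- The cyclic antisymmetrizer `A f = Σ_{j=0}^{n} (−1)^{nj} (λ_H^*)^j f`. -/
def antisymOp (act : H → A → A) (n : ℕ) (f : Cochain A H n) : Cochain A H n :=
  fun a h =>
    ∑ j : Fin (n + 1), (-1 : ℂ) ^ (n * (j : ℕ)) * ((lamOp act n)^[(j : ℕ)] f) a h

/-- A cochain is cyclic if `λ_H^* f = (−1)^n f`. -/
def IsCyclic (act : H → A → A) (n : ℕ) (f : Cochain A H n) : Prop :=
  lamOp act n f = ((-1 : ℂ) ^ n) • f

/-- The cochain `f_a(a⁰,…,aⁿ⁻¹|h) = f(a⁰,…,aⁿ⁻¹,a|h)`. -/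
def contract (n : ℕ) (f : Cochain A H (n + 1)) (a : A) : Cochain A H n :=
  fun v h => f (fun i => if hi : (i : ℕ) < n + 1 then v ⟨(i : ℕ), hi⟩ else a) h

/-- `(δ_a^* f)(a⁰,…,aⁿ|h) = Σ_{i=0}^{n} f(a⁰,…, a aⁱ − aⁱ a, …, aⁿ|h)`. -/
def deltaStar (n : ℕ) (a : A) (f : Cochain A H n) : Cochain A H n :=
  fun v h => ∑ i : Fin (n + 1), f (Function.update v i (a * v i - v i * a)) h

/-- The exponential `exp(a) = Σ_k a^k/k!` of a nilpotent element with
`a ^ N = 0`; the sum is finite. -/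
def expNil (a : A) (N : ℕ) : A :=
  ∑ k ∈ Finset.range N, ((k.factorial : ℂ))⁻¹ • a ^ k

variable {m : ℕ}

/-- The action of `H` on `A ⊗ End(ℂᵐ)`, realized as `m × m` matrices over `A`:
`h · M = U(h) (h·M) U(h)⁻¹`. -/
def matAct (act : H → A → A) (U : H →* Matrix.unitaryGroup (Fin m) ℂ) :
    H → Matrix (Fin m) (Fin m) A → Matrix (Fin m) (Fin m) A :=
  fun h M =>
    ((U h : Matrix (Fin m) (Fin m) ℂ).map fun c => algebraMap ℂ A c) *
      (M.map (act h)) *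
      ((U h⁻¹ : Matrix (Fin m) (Fin m) ℂ).map fun c => algebraMap ℂ A c)

/-- The cochain `f ♯ tr` on `A ⊗ End(ℂᵐ)`, realized as matrices over `A`:
on elementary tensors it is `f(a⁰,…,aⁿ|h) · tr(T⁰ ⋯ Tⁿ U(h))`. -/
def sharpTr (n : ℕ) (f : Cochain A H n) (U : H →* Matrix.unitaryGroup (Fin m) ℂ) :
    Cochain (Matrix (Fin m) (Fin m) A) H n :=
  fun M h =>
    ∑ idx : Fin (n + 2) → Fin m,
      f (fun j => M j (idx j.castSucc) (idx j.succ)) h *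
        (U h : Matrix (Fin m) (Fin m) ℂ) (idx (Fin.last (n + 1))) (idx 0)

open Finset

def precomp {B K : Type*} {N n : ℕ} (φ : K → (Fin (N + 1) → B) → Fin (n + 1) → B) :
    Cochain B K n →ₗ[ℂ] Cochain B K N where
  toFun f a h := f (φ h a) h
  map_add' _ _ := rfl
  map_smul' _ _ := rfl

@[simp]
theorem precomp_apply {B K : Type*} {N n : ℕ} (φ : K → (Fin (N + 1) → B) → Fin (n + 1) → B)
    (f : Cochain B K n) (a : Fin (N + 1) → B) (h : K) : precomp φ f a h = f (φ h a) h := rfl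

section Faces

omit [Algebra ℂ A]

variable (act : H → A → A)

def cycArgs (n : ℕ) (h : H) (a : Fin (n + 1) → A) : Fin (n + 1) → A :=
  fun i =>
    if (i : ℕ) = 0 then act h⁻¹ (a (Fin.last n))
    else a ⟨(i : ℕ) - 1, lt_of_le_of_lt (Nat.sub_le _ _) i.isLt⟩

/-- For `j ≤ n` the `j`-th face of `b'`; for `j = n + 1` the twisted face that `b` adds. -/
def faceArgs (n j : ℕ) (h : H) (a : Fin (n + 2) → A) : Fin (n + 1) → A :=
  if j ≤ n then
    fun i =>
      if (i : ℕ) < j then a i.castSucc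
      else if (i : ℕ) = j then a i.castSucc * a i.succ
      else a i.succ
  else
    fun i =>
      if (i : ℕ) = 0 then act h⁻¹ (a (Fin.last (n + 1))) * a 0
      else a i.castSucc

def face (n j : ℕ) : Cochain A H n →ₗ[ℂ] Cochain A H (n + 1) :=
  precomp (faceArgs act n j)

omit [Ring A] in
theorem lamOp_eq_precomp (n : ℕ) : lamOp act n = precomp (cycArgs act n) := rfl

theorem faceArgs_zero_cycArgs (n : ℕ) (h : H) (a : Fin (n + 2) → A) :
    faceArgs act n 0 h (cycArgs act (n + 1) h a) = faceArgs act n (n + 1) h a := by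
  funext i
  rcases i with ⟨_ | i, _⟩
  · simp [faceArgs, cycArgs]
  · simp [faceArgs, cycArgs]

theorem faceArgs_succ_cycArgs_of_lt {n j : ℕ} (hj : j < n) (h : H) (a : Fin (n + 2) → A) :
    faceArgs act n (j + 1) h (cycArgs act (n + 1) h a) =
      cycArgs act n h (faceArgs act n j h a) := by
  funext i
  rcases i with ⟨_ | i, _⟩
  · simp [faceArgs, cycArgs, hj.ne', hj.le, hj.not_gt, Nat.succ_le_of_lt hj]
  · simp [faceArgs, cycArgs, hj.le, Nat.succ_le_of_lt hj]

theorem faceArgs_last_cycArgs (hmul : ∀ (h : H) (x y : A), act h (x * y) = act h x * act h y)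
    (n : ℕ) (h : H) (a : Fin (n + 2) → A) :
    faceArgs act n (n + 1) h (cycArgs act (n + 1) h a) =
      cycArgs act n h (faceArgs act n n h a) := by
  funext i
  rcases Fin.eq_zero_or_eq_succ i with rfl | ⟨i, rfl⟩
  · simp [faceArgs, cycArgs, hmul, Fin.last]
  · simp [faceArgs, cycArgs]

theorem lamOp_face_zero (n : ℕ) (f : Cochain A H n) :
    lamOp act (n + 1) (face act n 0 f) = face act n (n + 1) f := by
  funext a h
  simp only [lamOp_eq_precomp, face, precomp_apply, faceArgs_zero_cycArgs]

theorem lamOp_face_succ (hmul : ∀ (h : H) (x y : A), act h (x * y) = act h x * act h y)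
    {n j : ℕ} (hj : j ≤ n) (f : Cochain A H n) :
    lamOp act (n + 1) (face act n (j + 1) f) = face act n j (lamOp act n f) := by
  funext a h
  rcases hj.lt_or_eq with hj | rfl
  · simp only [lamOp_eq_precomp, face, precomp_apply, faceArgs_succ_cycArgs_of_lt act hj]
  · simp only [lamOp_eq_precomp, face, precomp_apply, faceArgs_last_cycArgs act hmul]

theorem lamOp_iterate_face_of_le (hmul : ∀ (h : H) (x y : A), act h (x * y) = act h x * act h y)
    {n k j : ℕ} (hkj : k ≤ j) (hj : j ≤ n + 1) (f : Cochain A H n) :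
    (lamOp act (n + 1))^[k] (face act n j f) = face act n (j - k) ((lamOp act n)^[k] f) := by
  induction k generalizing j f with
  | zero => rfl
  | succ k ih =>
    obtain ⟨j, rfl⟩ : ∃ j', j = j' + 1 := ⟨j - 1, by omega⟩
    rw [Function.iterate_succ_apply, lamOp_face_succ act hmul (by omega),
      ih (by omega) (by omega), ← Function.iterate_succ_apply, Nat.add_sub_add_right]

theorem lamOp_iterate_face_of_lt (hmul : ∀ (h : H) (x y : A), act h (x * y) = act h x * act h y)
    {n k j : ℕ} (hjk : j < k) (hk : k ≤ n + 1) (f : Cochain A H n) :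
    (lamOp act (n + 1))^[k] (face act n j f) =
      face act n (n + 2 + j - k) ((lamOp act n)^[k - 1] f) := by
  obtain ⟨m, rfl⟩ : ∃ m, k = m + (j + 1) := ⟨k - (j + 1), by omega⟩
  rw [Function.iterate_add_apply, Function.iterate_succ_apply',
    lamOp_iterate_face_of_le act hmul le_rfl (by omega), Nat.sub_self, lamOp_face_zero,
    lamOp_iterate_face_of_le act hmul (by omega) le_rfl, ← Function.iterate_add_apply,
    show n + 2 + j - (m + (j + 1)) = n + 1 - m by omega, show m + (j + 1) - 1 = m + j by omega]

omit [Ring A] in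
theorem lamOp_iterate_sum {ι : Type*} (n k : ℕ) (s : Finset ι) (c : ι → ℂ)
    (F : ι → Cochain A H n) :
    (lamOp act n)^[k] (∑ i ∈ s, c i • F i) = ∑ i ∈ s, c i • (lamOp act n)^[k] (F i) := by
  simp only [lamOp_eq_precomp, ← Module.End.coe_pow, map_sum, map_smul]

theorem bPrime_eq_sum (n : ℕ) (f : Cochain A H n) :
    bPrime n f = ∑ j ∈ range (n + 1), (-1 : ℂ) ^ j • face act n j f := by
  funext a h
  simp only [bPrime, Finset.sum_apply, Pi.smul_apply, smul_eq_mul, face, precomp_apply]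
  rw [← Fin.sum_univ_eq_sum_range]
  refine sum_congr rfl fun j _ => ?_
  rw [faceArgs, if_pos (Nat.lt_succ_iff.mp j.isLt)]

theorem bOp_eq_sum (n : ℕ) (f : Cochain A H n) :
    bOp act n f = ∑ j ∈ range (n + 2), (-1 : ℂ) ^ j • face act n j f := by
  funext a h
  rw [sum_range_succ, ← bPrime_eq_sum]
  simp only [bOp, Pi.add_apply, Pi.smul_apply, smul_eq_mul, face, precomp_apply, faceArgs,
    if_neg (Nat.not_succ_le_self n)]

omit [Ring A] in
theorem antisymOp_eq_sum (n : ℕ) (f : Cochain A H n) :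
    antisymOp act n f = ∑ j ∈ range (n + 1), (-1 : ℂ) ^ (n * j) • (lamOp act n)^[j] f := by
  funext a h
  simp only [antisymOp, Finset.sum_apply, Pi.smul_apply, smul_eq_mul]
  exact Fin.sum_univ_eq_sum_range (fun j => (-1 : ℂ) ^ (n * j) * (lamOp act n)^[j] f a h) _

end Faces

theorem sum_range_cyclic_reindex {M : Type*} [AddCommMonoid M] (n : ℕ) (G : ℕ → ℕ → M) :
    ∑ k ∈ range (n + 2), ∑ j ∈ range (n + 1),
        (if k ≤ j then G (j - k) k else G (n + 2 + j - k) (k - 1)) =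
      ∑ i ∈ range (n + 2), ∑ m ∈ range (n + 1), G i m := by
  rw [← sum_product', ← sum_product']
  refine sum_nbij'
    (fun p => if p.1 ≤ p.2 then (p.2 - p.1, p.1) else (n + 2 + p.2 - p.1, p.1 - 1))
    (fun q => if q.1 + q.2 ≤ n then (q.2, q.1 + q.2) else (q.2 + 1, q.1 + q.2 - (n + 1)))
    ?_ ?_ ?_ ?_ fun p _ => by split_ifs <;> rfl
  all_goals
    rintro ⟨x, y⟩ hxy
    simp only [mem_product, mem_range] at hxy ⊢
    split_ifs <;> simp only [Prod.mk.injEq, true_and, and_true] at * <;> omega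

theorem stmt4_general {A H : Type*} [Ring A] [Algebra ℂ A] [Group H]
    (act : H → A → A) (hact : IsAlgAction act)
    (n : ℕ) (f : Cochain A H n) :
    antisymOp act (n + 1) (bPrime n f) = bOp act n (antisymOp act n f) := by
  have hmul := hact.2.2.2.1
  rw [antisymOp_eq_sum, bPrime_eq_sum act, bOp_eq_sum, antisymOp_eq_sum]
  simp only [lamOp_iterate_sum, map_sum, map_smul, smul_sum, smul_smul]
  conv_rhs => rw [← sum_range_cyclic_reindex]
  refine sum_congr rfl fun k hk => sum_congr rfl fun j hj => ?_
  rw [mem_range] at hk hj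
  have hsucc_mul : (n + 1) * k = n * k + k := by ring
  split_ifs with hkj
  · rw [lamOp_iterate_face_of_le act hmul hkj (by omega), ← pow_add, ← pow_add]
    exact congrArg (· • _) (neg_one_pow_congr (by simp only [Nat.even_iff]; omega))
  · have hmul_pred : n * k = n * (k - 1) + n := by
      rw [← mul_add_one, Nat.sub_add_cancel (by omega : 1 ≤ k)]
    rw [lamOp_iterate_face_of_lt act hmul (by omega) (by omega), ← pow_add, ← pow_add]
    exact congrArg (· • _) (neg_one_pow_congr (by simp only [Nat.even_iff]; omega))

/-- `A ∘ b' = b ∘ A` on equivariant cochains. -/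
theorem stmt4 {A H : Type*} [Ring A] [Algebra ℂ A] [Group H]
    (act : H → A → A) (hact : IsAlgAction act)
    (n : ℕ) (f : Cochain A H n) (hf : IsEquivCochain act n f) :
    antisymOp act (n + 1) (bPrime n f) = bOp act n (antisymOp act n f) :=
  stmt4_general act hact n f

end

end EquivCyclic
end

section
/- If f is an equivariant cyclic n-cochain on (A,H), then f♯tr is an equivariant cyclic n-cochain on (A ⊗ End(X), H): λ_H^*(f♯tr) = (−1)^n (f♯tr). -/
open scoped BigOperators

namespace EquivCyclic

noncomputable section

variable {A H : Type*} [Ring A] [Algebra ℂ A] [Group H]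

variable {m : ℕ}

private lemma update_sum {A H : Type*} [Ring A] [Algebra ℂ A] [Group H] {n : ℕ}
    {f : Cochain A H n}
    (hm : IsMultilinear n f) (a : Fin (n + 1) → A) (i : Fin (n + 1)) (h : H)
    {ι : Type*} [DecidableEq ι] (s : Finset ι) (c : ι → ℂ) (v : ι → A) :
    f (Function.update a i (∑ x ∈ s, c x • v x)) h
      = ∑ x ∈ s, c x * f (Function.update a i (v x)) h := by
  induction s using Finset.induction_on with
  | empty =>
      simp only [Finset.sum_empty]
      have h0 := (hm a i h).2 0 0
      simpa using h0
  | @insert x s hx ih =>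
      rw [Finset.sum_insert hx, Finset.sum_insert hx, (hm a i h).1, (hm a i h).2, ih]

/-- if `f` is an equivariant cyclic `n`-cochain on `(A, H)`, then
`f ♯ tr` is an equivariant cyclic `n`-cochain on `(A ⊗ End(X), H)`:
`λ_H^*(f♯tr) = (−1)^n (f♯tr)`. -/
theorem stmt7 {A H : Type*} [Ring A] [Algebra ℂ A] [Group H] {m : ℕ}
    (act : H → A → A) (hact : IsAlgAction act)
    (U : H →* Matrix.unitaryGroup (Fin m) ℂ)
    (n : ℕ) (f : Cochain A H n) (hf : IsEquivCochain act n f)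
    (hcyc : IsCyclic act n f) :
    IsCyclic (matAct act U) n (sharpTr n f U) := by
  classical
  obtain ⟨hm, -⟩ := hf
  funext M h
  simp only [lamOp, sharpTr, Pi.smul_apply, smul_eq_mul]
  set Uh : Matrix (Fin m) (Fin m) ℂ := (U h : Matrix (Fin m) (Fin m) ℂ) with hUh
  set Ui : Matrix (Fin m) (Fin m) ℂ := (U h⁻¹ : Matrix (Fin m) (Fin m) ℂ) with hUi
  have hUU : Uh * Ui = 1 := by
    have h1 : ((U h * U h⁻¹ : Matrix.unitaryGroup (Fin m) ℂ) : Matrix (Fin m) (Fin m) ℂ)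
        = Uh * Ui := rfl
    rw [← h1, ← map_mul, mul_inv_cancel, map_one]
    rfl
  -- cyclicity of f, pointwise
  have hc : ∀ b : Fin (n + 1) → A,
      f (fun i => if (i : ℕ) = 0 then act h⁻¹ (b (Fin.last n))
          else b ⟨(i : ℕ) - 1, lt_of_le_of_lt (Nat.sub_le _ _) i.isLt⟩) h
        = (-1 : ℂ) ^ n * f b h := by
    intro b
    have h2 := congrFun (congrFun hcyc b) h
    simpa [lamOp] using h2
  -- basic Fin index facts
  have e0 : Fin.castSucc (0 : Fin (n + 1)) = (0 : Fin (n + 2)) := by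
    apply Fin.ext; simp
  have e1 : Fin.succ (0 : Fin (n + 1)) = (1 : Fin (n + 2)) := by
    apply Fin.ext; simp
  have z0 : (0 : Fin (n + 2)) = Fin.castSucc (0 : Fin (n + 1)) := e0.symm
  -- the tuple appearing after applying cyclicity
  set B : (Fin (n + 1) → Fin m) → Fin m → Fin m → (Fin (n + 1) → A) := fun t r s k =>
    if hk : (k : ℕ) < n then M k (t k) (t ⟨(k : ℕ) + 1, by omega⟩)
    else M (Fin.last n) r s with hBdef
  -- Step 1: expand the 0-th slot and apply cyclicity
  have step1 : ∀ idx : Fin (n + 2) → Fin m,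
      f (fun j => (if (j : ℕ) = 0 then matAct act U h⁻¹ (M (Fin.last n))
          else M ⟨(j : ℕ) - 1, lt_of_le_of_lt (Nat.sub_le _ _) j.isLt⟩)
            (idx j.castSucc) (idx j.succ)) h
        = ∑ rs : Fin m × Fin m,
            (Ui (idx 0) rs.1 * Uh rs.2 (idx 1)) *
              ((-1 : ℂ) ^ n * f (B (Fin.tail idx) rs.1 rs.2) h) := by
    intro idx
    have harg : (fun j : Fin (n + 1) => (if (j : ℕ) = 0 then matAct act U h⁻¹ (M (Fin.last n))
          else M ⟨(j : ℕ) - 1, lt_of_le_of_lt (Nat.sub_le _ _) j.isLt⟩)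
            (idx j.castSucc) (idx j.succ))
        = Function.update
            (fun j : Fin (n + 1) =>
              M ⟨(j : ℕ) - 1, lt_of_le_of_lt (Nat.sub_le _ _) j.isLt⟩
                (idx j.castSucc) (idx j.succ))
            0 (matAct act U h⁻¹ (M (Fin.last n)) (idx 0) (idx 1)) := by
      funext j
      rw [Function.update_apply]
      by_cases hj : (j : ℕ) = 0
      · have h0 : j = 0 := Fin.ext (by simpa using hj)
        subst h0
        rw [if_pos hj, if_pos rfl, e0, e1]
      · rw [if_neg hj, if_neg (fun e => hj (by rw [e]; simp))]
    have hX : matAct act U h⁻¹ (M (Fin.last n)) (idx 0) (idx 1)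
        = ∑ rs : Fin m × Fin m,
            (Ui (idx 0) rs.1 * Uh rs.2 (idx 1)) •
              act h⁻¹ (M (Fin.last n) rs.1 rs.2) := by
      rw [Fintype.sum_prod_type, hUi, hUh]
      simp only [matAct, Matrix.mul_apply, Matrix.map_apply, inv_inv, Finset.sum_mul]
      rw [Finset.sum_comm]
      refine Finset.sum_congr rfl fun r _ => Finset.sum_congr rfl fun s _ => ?_
      rw [mul_assoc, ← Algebra.commutes, ← mul_assoc, ← map_mul, ← Algebra.smul_def]
    rw [harg, hX, update_sum hm]
    refine Finset.sum_congr rfl fun rs _ => ?_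
    have hupd : Function.update
            (fun j : Fin (n + 1) =>
              M ⟨(j : ℕ) - 1, lt_of_le_of_lt (Nat.sub_le _ _) j.isLt⟩
                (idx j.castSucc) (idx j.succ))
            0 (act h⁻¹ (M (Fin.last n) rs.1 rs.2))
        = (fun i : Fin (n + 1) => if (i : ℕ) = 0 then
              act h⁻¹ ((B (Fin.tail idx) rs.1 rs.2) (Fin.last n))
            else (B (Fin.tail idx) rs.1 rs.2)
              ⟨(i : ℕ) - 1, lt_of_le_of_lt (Nat.sub_le _ _) i.isLt⟩) := by
      funext i
      rw [Function.update_apply]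
      by_cases hi : (i : ℕ) = 0
      · have h0 : i = 0 := Fin.ext (by simpa using hi)
        subst h0
        rw [if_pos rfl, if_pos hi]
        have hBlast : B (Fin.tail idx) rs.1 rs.2 (Fin.last n)
            = M (Fin.last n) rs.1 rs.2 := by
          simp only [hBdef]
          rw [dif_neg (by simp)]
        rw [hBlast]
      · have hi' : i ≠ 0 := fun e => hi (by rw [e]; simp)
        rw [if_neg hi', if_neg hi]
        have hlt : (i : ℕ) - 1 < n := by
          have := i.isLt; omega
        simp only [hBdef]
        rw [dif_pos hlt]
        simp only [Fin.tail]
        congr 1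
        · congr 1
          apply Fin.ext
          simp only [Fin.val_succ, Fin.coe_castSucc]
          omega
        · apply congrArg
          apply Fin.ext
          simp only [Fin.val_succ]
          omega
    rw [hupd, hc]
  -- evaluation facts for `Fin.cons`
  have ec1 : ∀ (p : Fin m) (t : Fin (n + 1) → Fin m),
      Fin.cons (α := fun _ : Fin (n + 2) => Fin m) p t (1 : Fin (n + 2)) = t 0 := by
    intro p t
    have hcs := Fin.cons_succ (α := fun _ : Fin (n + 2) => Fin m) p t 0
    rw [e1] at hcs
    exact hcs
  have ecl : ∀ (p : Fin m) (t : Fin (n + 1) → Fin m),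
      Fin.cons (α := fun _ : Fin (n + 2) => Fin m) p t (Fin.last (n + 1)) = t (Fin.last n) := by
    intro p t; rw [← Fin.succ_last, Fin.cons_succ]
  -- the key collapse over p and r
  have key : ∀ t : Fin (n + 1) → Fin m,
      (∑ p : Fin m, ∑ rs : Fin m × Fin m,
          (Ui p rs.1 * Uh rs.2 (t 0)) * ((-1 : ℂ) ^ n * f (B t rs.1 rs.2) h)
            * Uh (t (Fin.last n)) p)
        = ∑ s : Fin m, Uh s (t 0) * ((-1 : ℂ) ^ n * f (B t (t (Fin.last n)) s) h) := by
    intro t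
    rw [Finset.sum_comm]
    rw [Fintype.sum_prod_type]
    calc (∑ r : Fin m, ∑ s : Fin m, ∑ p : Fin m,
            (Ui p r * Uh s (t 0)) * ((-1 : ℂ) ^ n * f (B t r s) h)
              * Uh (t (Fin.last n)) p)
        = ∑ r : Fin m, ∑ s : Fin m,
            ((Uh * Ui) (t (Fin.last n)) r) *
              (Uh s (t 0) * ((-1 : ℂ) ^ n * f (B t r s) h)) := by
          refine Finset.sum_congr rfl fun r _ => Finset.sum_congr rfl fun s _ => ?_
          rw [Matrix.mul_apply, Finset.sum_mul]
          exact Finset.sum_congr rfl fun p _ => by ring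
      _ = ∑ s : Fin m, Uh s (t 0) * ((-1 : ℂ) ^ n * f (B t (t (Fin.last n)) s) h) := by
          rw [hUU, Finset.sum_comm]
          refine Finset.sum_congr rfl fun s _ => ?_
          simp [Matrix.one_apply, ite_mul, Finset.sum_ite_eq]
  -- right-hand side, reindexed by `Fin.snoc`
  have hRHS : ((-1 : ℂ) ^ n *
        ∑ idx : Fin (n + 2) → Fin m,
          f (fun j => M j (idx j.castSucc) (idx j.succ)) h
            * Uh (idx (Fin.last (n + 1))) (idx 0))
      = ∑ t : Fin (n + 1) → Fin m, ∑ s : Fin m,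
          Uh s (t 0) * ((-1 : ℂ) ^ n * f (B t (t (Fin.last n)) s) h) := by
    rw [Finset.mul_sum, ← Equiv.sum_comp (Fin.snocEquiv fun _ => Fin m),
      Fintype.sum_prod_type, Finset.sum_comm]
    refine Finset.sum_congr rfl fun t _ => Finset.sum_congr rfl fun s _ => ?_
    have es : (Fin.snocEquiv fun _ : Fin (n + 2) => Fin m) (s, t) = Fin.snoc t s := by
      funext j; simp [Fin.snocEquiv]
    rw [es]
    have e0' : Fin.snoc (α := fun _ : Fin (n + 2) => Fin m) t s (0 : Fin (n + 2)) = t 0 := by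
      rw [z0, Fin.snoc_castSucc]
    have el : Fin.snoc (α := fun _ : Fin (n + 2) => Fin m) t s (Fin.last (n + 1)) = s :=
      Fin.snoc_last (α := fun _ : Fin (n + 2) => Fin m) s t
    have earg : (fun j : Fin (n + 1) =>
          M j (Fin.snoc (α := fun _ : Fin (n + 2) => Fin m) t s j.castSucc)
            (Fin.snoc (α := fun _ : Fin (n + 2) => Fin m) t s j.succ))
        = B t (t (Fin.last n)) s := by
      funext k
      rw [Fin.snoc_castSucc]
      by_cases hk : (k : ℕ) < n
      · have hsucc : k.succ = Fin.castSucc (⟨(k : ℕ) + 1, by omega⟩ : Fin (n + 1)) := by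
          apply Fin.ext; simp
        rw [hsucc, Fin.snoc_castSucc]
        simp only [hBdef]
        rw [dif_pos hk]
      · have hkl : k = Fin.last n := by
          apply Fin.ext
          have := k.isLt
          simp only [Fin.val_last]
          omega
        subst hkl
        rw [Fin.succ_last, Fin.snoc_last]
        simp only [hBdef]
        rw [dif_neg hk]
    rw [e0', el, earg]
    ring
  -- put everything together
  calc (∑ idx : Fin (n + 2) → Fin m,
          f (fun j => (if (j : ℕ) = 0 then matAct act U h⁻¹ (M (Fin.last n))
              else M ⟨(j : ℕ) - 1, lt_of_le_of_lt (Nat.sub_le _ _) j.isLt⟩)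
                (idx j.castSucc) (idx j.succ)) h
            * Uh (idx (Fin.last (n + 1))) (idx 0))
      = ∑ idx : Fin (n + 2) → Fin m, ∑ rs : Fin m × Fin m,
          (Ui (idx 0) rs.1 * Uh rs.2 (idx 1)) *
            ((-1 : ℂ) ^ n * f (B (Fin.tail idx) rs.1 rs.2) h)
            * Uh (idx (Fin.last (n + 1))) (idx 0) := by
        refine Finset.sum_congr rfl fun idx _ => ?_
        rw [step1 idx, Finset.sum_mul]
    _ = ∑ p : Fin m, ∑ t : Fin (n + 1) → Fin m, ∑ rs : Fin m × Fin m,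
          (Ui p rs.1 * Uh rs.2 (t 0)) * ((-1 : ℂ) ^ n * f (B t rs.1 rs.2) h)
            * Uh (t (Fin.last n)) p := by
        rw [← Equiv.sum_comp (Fin.consEquiv fun _ : Fin (n + 2) => Fin m),
          Fintype.sum_prod_type]
        refine Finset.sum_congr rfl fun p _ => Finset.sum_congr rfl fun t _ => ?_
        simp only [Fin.consEquiv_apply, Fin.cons_zero, Fin.tail_cons, ec1, ecl]
        refine Finset.sum_congr rfl fun rs _ => ?_
        have htl : Fin.tail ((Fin.consEquiv fun _ : Fin (n + 2) => Fin m) (p, t)) = t := by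
          funext k; simp [Fin.consEquiv, Fin.tail]
        rw [htl]
    _ = ∑ t : Fin (n + 1) → Fin m, ∑ s : Fin m,
          Uh s (t 0) * ((-1 : ℂ) ^ n * f (B t (t (Fin.last n)) s) h) := by
        rw [Finset.sum_comm]
        exact Finset.sum_congr rfl fun t _ => key t
    _ = (-1 : ℂ) ^ n *
          ∑ idx : Fin (n + 2) → Fin m,
            f (fun j => M j (idx j.castSucc) (idx j.succ)) h
              * Uh (idx (Fin.last (n + 1))) (idx 0) := hRHS.symm

end

end EquivCyclic
end

section
/- Let n be even, let f be an equivariant cyclic n-cocycle on (A,H) (i.e. f is an equivariant cyclic n-cochain with bf = 0), and let e ∈ A ⊗ End(X) be an H-invariant idempotent (e² = e and h·e = e for all h ∈ H). Then the function ⟨f,e⟩ : H → ℂ defined by ⟨f,e⟩(h) = (f♯tr)(e, e, …, e|h) is a central function on H: ⟨f,e⟩(g h g^{-1}) = ⟨f,e⟩(h) for all g,h ∈ H. -/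
open scoped BigOperators

namespace EquivCyclic

noncomputable section

variable {A H : Type*} [Ring A] [Algebra ℂ A] [Group H]

variable {m : ℕ}

/-! ### Auxiliary material for the proof of `stmt9` -/

/-- Package an `IsMultilinear` cochain (at a fixed group element) as a
mathlib `MultilinearMap`. -/
def ofML (n : ℕ) (f : Cochain A H n) (hml : IsMultilinear n f) (h : H) :
    MultilinearMap ℂ (fun _ : Fin (n + 1) => A) ℂ where
  toFun a := f a h
  map_update_add' {dec} a i x y := by
    rw [Subsingleton.elim dec (instDecidableEqFin _)]
    exact (hml a i h).1 x y
  map_update_smul' {dec} a i c x := by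
    rw [Subsingleton.elim dec (instDecidableEqFin _)]
    simpa [smul_eq_mul] using (hml a i h).2 c x

def Pfun (n : ℕ) {m : ℕ} (pf : Fin (n+1) → Fin m) (s : Fin m) (k : Fin (n+2)) : Fin m :=
  if hk : (k:ℕ) < n+1 then pf ⟨k, hk⟩ else s

def Qfun (n : ℕ) {m : ℕ} (qf : Fin (n+1) → Fin m) (t : Fin m) (k : Fin (n+2)) : Fin m :=
  if (k:ℕ) = 0 then t else qf ⟨(k:ℕ)-1, by have := k.isLt; omega⟩

def pdef (n : ℕ) {m : ℕ} (qf : Fin (n+1) → Fin m) (t : Fin m) (j : Fin (n+1)) : Fin m :=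
  if (j:ℕ) = 0 then t else qf ⟨(j:ℕ)-1, by have := j.isLt; omega⟩

variable {m n : ℕ}

lemma Q_zero (qf : Fin (n+1) → Fin m) (t : Fin m) : Qfun n qf t 0 = t := by simp [Qfun]

lemma Q_succ (qf : Fin (n+1) → Fin m) (t : Fin m) (j : Fin (n+1)) :
    Qfun n qf t j.succ = qf j := by
  simp [Qfun, Fin.val_succ]

lemma Q_castSucc (qf : Fin (n+1) → Fin m) (t : Fin m) (j : Fin (n+1)) :
    Qfun n qf t j.castSucc = pdef n qf t j := by
  by_cases h0 : (j:ℕ) = 0 <;> simp [Qfun, pdef, h0]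

lemma Q_last (qf : Fin (n+1) → Fin m) (t : Fin m) :
    Qfun n qf t (Fin.last (n+1)) = qf (Fin.last n) := by
  simp [Qfun, Fin.last]

lemma P_castSucc (pf : Fin (n+1) → Fin m) (s : Fin m) (j : Fin (n+1)) :
    Pfun n pf s j.castSucc = pf j := by
  simp [Pfun, j.isLt]

lemma P_last (pf : Fin (n+1) → Fin m) (s : Fin m) :
    Pfun n pf s (Fin.last (n+1)) = s := by
  simp [Pfun]

lemma cons_castSucc (qf : Fin (n+1) → Fin m) (t : Fin m) (j : Fin (n+1)) :
    Fin.cons (α := fun _ => Fin m) t qf j.castSucc = pdef n qf t j := by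
  induction j using Fin.cases with
  | zero => simp [pdef]
  | succ i =>
      rw [← Fin.succ_castSucc, Fin.cons_succ]
      simp only [pdef, Fin.val_succ, Nat.add_sub_cancel]
      rw [if_neg (Nat.succ_ne_zero _)]
      exact congrArg qf (Fin.ext rfl)

lemma cond_iff (pf qf : Fin (n+1) → Fin m) (s t : Fin m) :
    (∀ k : Fin (n+2), Qfun n qf t k = Pfun n pf s k) ↔
      (pf = pdef n qf t ∧ s = qf (Fin.last n)) := by
  constructor
  · intro hc
    constructor
    · funext j
      have := hc j.castSucc
      rw [Q_castSucc, P_castSucc] at this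
      exact this.symm
    · have := hc (Fin.last (n+1))
      rw [Q_last, P_last] at this
      exact this.symm
  · rintro ⟨rfl, rfl⟩ k
    by_cases hk : (k:ℕ) < n+1
    · have hkk : k = (⟨(k:ℕ), hk⟩ : Fin (n+1)).castSucc := Fin.ext rfl
      rw [hkk, Q_castSucc, P_castSucc]
    · have hkk : k = Fin.last (n+1) := Fin.ext (by have := k.isLt; simp [Fin.last]; omega)
      rw [hkk, Q_last, P_last]

/-- The key telescoping sum over internal matrix indices. -/
lemma idx_sum (Ug Ug' : Matrix (Fin m) (Fin m) ℂ) (hUU : Ug' * Ug = 1)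
    (pf qf : Fin (n+1) → Fin m) (s t : Fin m) :
    (∑ idx : Fin (n+2) → Fin m,
      (∏ j : Fin (n+1), Ug (idx j.castSucc) (pf j) * Ug' (qf j) (idx j.succ)) *
        (Ug (idx (Fin.last (n+1))) s * Ug' t (idx 0)))
    = if pf = pdef n qf t ∧ s = qf (Fin.last n) then 1 else 0 := by
  classical
  have hterm : ∀ idx : Fin (n+2) → Fin m,
      (∏ j : Fin (n+1), Ug (idx j.castSucc) (pf j) * Ug' (qf j) (idx j.succ)) *
        (Ug (idx (Fin.last (n+1))) s * Ug' t (idx 0))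
      = ∏ k : Fin (n+2), (Ug' (Qfun n qf t k) (idx k) * Ug (idx k) (Pfun n pf s k)) := by
    intro idx
    rw [Finset.prod_mul_distrib, Finset.prod_mul_distrib,
      Fin.prod_univ_succ (fun k => Ug' (Qfun n qf t k) (idx k)),
      Fin.prod_univ_castSucc (fun k => Ug (idx k) (Pfun n pf s k))]
    rw [Q_zero, P_last]
    simp only [Q_succ, P_castSucc]
    ring
  simp only [hterm]
  rw [← Fintype.piFinset_univ,
    ← Finset.prod_univ_sum (fun _ : Fin (n+2) => (Finset.univ : Finset (Fin m)))
      (fun k i => Ug' (Qfun n qf t k) i * Ug i (Pfun n pf s k))]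
  have hone : ∀ k : Fin (n+2),
      (∑ i : Fin m, Ug' (Qfun n qf t k) i * Ug i (Pfun n pf s k))
      = if Qfun n qf t k = Pfun n pf s k then 1 else 0 := by
    intro k
    have h2 := congrFun (congrFun hUU (Qfun n qf t k)) (Pfun n pf s k)
    rw [Matrix.mul_apply] at h2
    rw [h2, Matrix.one_apply]
  simp only [hone]
  rw [Finset.prod_boole]
  simp only [Finset.mem_univ, forall_true_left]
  by_cases hc : ∀ k : Fin (n+2), Qfun n qf t k = Pfun n pf s k
  · rw [if_pos hc, if_pos ((cond_iff pf qf s t).mp hc)]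
  · rw [if_neg hc, if_neg (fun hr => hc ((cond_iff pf qf s t).mpr hr))]

lemma collapse (C : (Fin (n+1) → Fin m) → Fin m → ℂ)
    (pf0 : Fin (n+1) → Fin m) (s0 : Fin m) :
    (∑ pf : Fin (n+1) → Fin m, ∑ s : Fin m,
      C pf s * (if pf = pf0 ∧ s = s0 then 1 else 0)) = C pf0 s0 := by
  classical
  have h1 : ∀ (pf : Fin (n+1) → Fin m) (s : Fin m),
      C pf s * (if pf = pf0 ∧ s = s0 then 1 else 0)
        = if pf = pf0 then (if s = s0 then C pf s else 0) else 0 := by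
    intro pf s
    by_cases h1 : pf = pf0 <;> by_cases h2 : s = s0 <;> simp [h1, h2]
  simp only [h1]
  rw [Fintype.sum_eq_single pf0 (fun pf hpf => by simp [hpf])]
  simp


/-- for `n` even, `f` an equivariant cyclic `n`-cocycle on
`(A, H)` and `e ∈ A ⊗ End(X)` an `H`-invariant idempotent, the function
`⟨f, e⟩(h) = (f♯tr)(e, …, e | h)` is a central function on `H`. -/
theorem stmt9 {A H : Type*} [Ring A] [Algebra ℂ A] [Group H] {m : ℕ}
    (act : H → A → A) (hact : IsAlgAction act)
    (U : H →* Matrix.unitaryGroup (Fin m) ℂ)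
    (n : ℕ) (hn : Even n) (f : Cochain A H n)
    (hf : IsEquivCochain act n f) (hcyc : IsCyclic act n f)
    (hcoc : bOp act n f = 0)
    (e : Matrix (Fin m) (Fin m) A) (he : e * e = e)
    (hinv : ∀ h : H, matAct act U h e = e) :
    ∀ g h : H,
      sharpTr n f U (fun _ => e) (g * h * g⁻¹) = sharpTr n f U (fun _ => e) h := by
  classical
  obtain ⟨hml, heq⟩ := hf
  intro g h
  -- basic unitary group facts
  have hUU : (U g⁻¹ : Matrix (Fin m) (Fin m) ℂ) * (U g : Matrix (Fin m) (Fin m) ℂ) = 1 := by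
    have h1 : (U g⁻¹ * U g : Matrix.unitaryGroup (Fin m) ℂ) = 1 := by
      rw [← map_mul, inv_mul_cancel, map_one]
    calc (U g⁻¹ : Matrix (Fin m) (Fin m) ℂ) * (U g : Matrix (Fin m) (Fin m) ℂ)
        = ((U g⁻¹ * U g : Matrix.unitaryGroup (Fin m) ℂ) : Matrix (Fin m) (Fin m) ℂ) := rfl
      _ = 1 := by rw [h1]; rfl
  have hUconj : (U (g * h * g⁻¹) : Matrix (Fin m) (Fin m) ℂ) =
      (U g : Matrix (Fin m) (Fin m) ℂ) * (U h : Matrix (Fin m) (Fin m) ℂ) *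
        (U g⁻¹ : Matrix (Fin m) (Fin m) ℂ) := by
    rw [map_mul, map_mul]; rfl
  -- entries of the invariant idempotent
  have hentry : ∀ i j : Fin m, e i j = ∑ p : Fin m, ∑ q : Fin m,
      ((U g : Matrix (Fin m) (Fin m) ℂ) i p * (U g⁻¹ : Matrix (Fin m) (Fin m) ℂ) q j) •
        act g (e p q) := by
    intro i j
    conv_lhs => rw [← hinv g]
    simp only [matAct, Matrix.mul_apply, Matrix.map_apply, Finset.sum_mul]
    rw [Finset.sum_comm]
    refine Finset.sum_congr rfl fun p _ => Finset.sum_congr rfl fun q _ => ?_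
    rw [mul_assoc, ← Algebra.commutes ((U g⁻¹ : Matrix (Fin m) (Fin m) ℂ) q j),
      ← mul_assoc, ← map_mul, ← Algebra.smul_def]
  -- expansion of the cochain applied to the entries of `e`, using
  -- multilinearity and equivariance
  have hsplit : ∀ idx : Fin (n+2) → Fin m,
      f (fun j : Fin (n+1) => e (idx j.castSucc) (idx j.succ)) (g*h*g⁻¹)
    = ∑ pf : Fin (n+1) → Fin m, ∑ qf : Fin (n+1) → Fin m,
        (∏ j : Fin (n+1), (U g : Matrix (Fin m) (Fin m) ℂ) (idx j.castSucc) (pf j) *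
          (U g⁻¹ : Matrix (Fin m) (Fin m) ℂ) (qf j) (idx j.succ)) *
          f (fun j => e (pf j) (qf j)) h := by
    intro idx
    have h1 : (fun j : Fin (n+1) => e (idx j.castSucc) (idx j.succ))
        = fun j : Fin (n+1) => ∑ p : Fin m, ∑ q : Fin m,
            (((U g : Matrix (Fin m) (Fin m) ℂ) (idx j.castSucc) p *
             (U g⁻¹ : Matrix (Fin m) (Fin m) ℂ) q (idx j.succ)) • act g (e p q)) :=
      funext fun j => hentry _ _
    have h2 : ∀ (v : Fin (n+1) → A), f v (g*h*g⁻¹) = ofML n f hml (g*h*g⁻¹) v :=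
      fun v => rfl
    rw [h2, h1, MultilinearMap.map_sum]
    refine Finset.sum_congr rfl fun pf _ => ?_
    rw [MultilinearMap.map_sum]
    refine Finset.sum_congr rfl fun qf _ => ?_
    rw [MultilinearMap.map_smul_univ, smul_eq_mul]
    congr 1
    exact heq h g fun j => e (pf j) (qf j)
  -- entries of the conjugated unitary
  have hW : ∀ a b : Fin m, (U (g * h * g⁻¹) : Matrix (Fin m) (Fin m) ℂ) a b
      = ∑ s : Fin m, ∑ t : Fin m,
          (U g : Matrix (Fin m) (Fin m) ℂ) a s * (U h : Matrix (Fin m) (Fin m) ℂ) s t *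
            (U g⁻¹ : Matrix (Fin m) (Fin m) ℂ) t b := by
    intro a b
    rw [hUconj]
    simp only [Matrix.mul_apply, Finset.sum_mul]
    exact Finset.sum_comm
  -- main computation
  calc sharpTr n f U (fun _ => e) (g * h * g⁻¹)
      = ∑ idx : Fin (n+2) → Fin m,
          (∑ pf : Fin (n+1) → Fin m, ∑ qf : Fin (n+1) → Fin m,
            (∏ j : Fin (n+1), (U g : Matrix (Fin m) (Fin m) ℂ) (idx j.castSucc) (pf j) *
              (U g⁻¹ : Matrix (Fin m) (Fin m) ℂ) (qf j) (idx j.succ)) *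
              f (fun j => e (pf j) (qf j)) h) *
          (U (g * h * g⁻¹) : Matrix (Fin m) (Fin m) ℂ) (idx (Fin.last (n+1))) (idx 0) := by
        simp only [sharpTr]
        exact Finset.sum_congr rfl fun idx _ => by rw [hsplit idx]
    _ = ∑ pf : Fin (n+1) → Fin m, ∑ qf : Fin (n+1) → Fin m,
          f (fun j => e (pf j) (qf j)) h *
          (∑ idx : Fin (n+2) → Fin m,
            (∏ j : Fin (n+1), (U g : Matrix (Fin m) (Fin m) ℂ) (idx j.castSucc) (pf j) *
              (U g⁻¹ : Matrix (Fin m) (Fin m) ℂ) (qf j) (idx j.succ)) *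
            (U (g * h * g⁻¹) : Matrix (Fin m) (Fin m) ℂ) (idx (Fin.last (n+1))) (idx 0)) := by
        simp only [Finset.sum_mul]
        rw [Finset.sum_comm]
        refine Finset.sum_congr rfl fun pf _ => ?_
        rw [Finset.sum_comm]
        refine Finset.sum_congr rfl fun qf _ => ?_
        rw [Finset.mul_sum]
        exact Finset.sum_congr rfl fun idx _ => by ring
    _ = ∑ pf : Fin (n+1) → Fin m, ∑ qf : Fin (n+1) → Fin m,
          f (fun j => e (pf j) (qf j)) h *
          (∑ s : Fin m, ∑ t : Fin m, (U h : Matrix (Fin m) (Fin m) ℂ) s t *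
            (∑ idx : Fin (n+2) → Fin m,
              (∏ j : Fin (n+1), (U g : Matrix (Fin m) (Fin m) ℂ) (idx j.castSucc) (pf j) *
                (U g⁻¹ : Matrix (Fin m) (Fin m) ℂ) (qf j) (idx j.succ)) *
              ((U g : Matrix (Fin m) (Fin m) ℂ) (idx (Fin.last (n+1))) s *
                (U g⁻¹ : Matrix (Fin m) (Fin m) ℂ) t (idx 0)))) := by
        refine Finset.sum_congr rfl fun pf _ => Finset.sum_congr rfl fun qf _ => ?_
        congr 1
        calc (∑ idx : Fin (n+2) → Fin m,
              (∏ j : Fin (n+1), (U g : Matrix (Fin m) (Fin m) ℂ) (idx j.castSucc) (pf j) *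
                (U g⁻¹ : Matrix (Fin m) (Fin m) ℂ) (qf j) (idx j.succ)) *
              (U (g * h * g⁻¹) : Matrix (Fin m) (Fin m) ℂ) (idx (Fin.last (n+1))) (idx 0))
            = ∑ idx : Fin (n+2) → Fin m, ∑ s : Fin m, ∑ t : Fin m,
              (∏ j : Fin (n+1), (U g : Matrix (Fin m) (Fin m) ℂ) (idx j.castSucc) (pf j) *
                (U g⁻¹ : Matrix (Fin m) (Fin m) ℂ) (qf j) (idx j.succ)) *
              ((U g : Matrix (Fin m) (Fin m) ℂ) (idx (Fin.last (n+1))) s *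
                (U h : Matrix (Fin m) (Fin m) ℂ) s t *
                (U g⁻¹ : Matrix (Fin m) (Fin m) ℂ) t (idx 0)) := by
              refine Finset.sum_congr rfl fun idx _ => ?_
              rw [hW]
              rw [Finset.mul_sum]
              refine Finset.sum_congr rfl fun s _ => ?_
              rw [Finset.mul_sum]
          _ = ∑ s : Fin m, ∑ t : Fin m, (U h : Matrix (Fin m) (Fin m) ℂ) s t *
              (∑ idx : Fin (n+2) → Fin m,
                (∏ j : Fin (n+1), (U g : Matrix (Fin m) (Fin m) ℂ) (idx j.castSucc) (pf j) *
                  (U g⁻¹ : Matrix (Fin m) (Fin m) ℂ) (qf j) (idx j.succ)) *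
                ((U g : Matrix (Fin m) (Fin m) ℂ) (idx (Fin.last (n+1))) s *
                  (U g⁻¹ : Matrix (Fin m) (Fin m) ℂ) t (idx 0))) := by
              rw [Finset.sum_comm]
              refine Finset.sum_congr rfl fun s _ => ?_
              rw [Finset.sum_comm]
              refine Finset.sum_congr rfl fun t _ => ?_
              rw [Finset.mul_sum]
              exact Finset.sum_congr rfl fun idx _ => by ring
    _ = ∑ pf : Fin (n+1) → Fin m, ∑ qf : Fin (n+1) → Fin m,
          f (fun j => e (pf j) (qf j)) h *
          (∑ s : Fin m, ∑ t : Fin m, (U h : Matrix (Fin m) (Fin m) ℂ) s t *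
            (if pf = pdef n qf t ∧ s = qf (Fin.last n) then 1 else 0)) := by
        refine Finset.sum_congr rfl fun pf _ => Finset.sum_congr rfl fun qf _ => ?_
        congr 1
        refine Finset.sum_congr rfl fun s _ => Finset.sum_congr rfl fun t _ => ?_
        rw [idx_sum _ _ hUU]
    _ = ∑ qf : Fin (n+1) → Fin m, ∑ t : Fin m,
          ∑ pf : Fin (n+1) → Fin m, ∑ s : Fin m,
          (f (fun j => e (pf j) (qf j)) h * (U h : Matrix (Fin m) (Fin m) ℂ) s t) *
            (if pf = pdef n qf t ∧ s = qf (Fin.last n) then 1 else 0) := by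
        simp only [Finset.mul_sum]
        rw [Finset.sum_comm]
        refine Finset.sum_congr rfl fun qf _ => ?_
        rw [show (∑ pf : Fin (n+1) → Fin m, ∑ s : Fin m, ∑ t : Fin m,
            f (fun j => e (pf j) (qf j)) h * ((U h : Matrix (Fin m) (Fin m) ℂ) s t *
              (if pf = pdef n qf t ∧ s = qf (Fin.last n) then 1 else 0)))
          = ∑ pf : Fin (n+1) → Fin m, ∑ t : Fin m, ∑ s : Fin m,
            f (fun j => e (pf j) (qf j)) h * ((U h : Matrix (Fin m) (Fin m) ℂ) s t *
              (if pf = pdef n qf t ∧ s = qf (Fin.last n) then 1 else 0))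
          from Finset.sum_congr rfl fun pf _ => Finset.sum_comm]
        rw [Finset.sum_comm]
        refine Finset.sum_congr rfl fun t _ => Finset.sum_congr rfl fun pf _ => ?_
        exact Finset.sum_congr rfl fun s _ => by ring
    _ = ∑ qf : Fin (n+1) → Fin m, ∑ t : Fin m,
          f (fun j => e (pdef n qf t j) (qf j)) h *
            (U h : Matrix (Fin m) (Fin m) ℂ) (qf (Fin.last n)) t := by
        refine Finset.sum_congr rfl fun qf _ => Finset.sum_congr rfl fun t _ => ?_
        exact collapse (fun pf s => f (fun j => e (pf j) (qf j)) h *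
          (U h : Matrix (Fin m) (Fin m) ℂ) s t) (pdef n qf t) (qf (Fin.last n))
    _ = sharpTr n f U (fun _ => e) h := by
        simp only [sharpTr]
        rw [← Equiv.sum_comp (Fin.consEquiv (fun _ : Fin (n+2) => Fin m))
          (fun idx : Fin (n+2) → Fin m =>
            f (fun j : Fin (n+1) => e (idx j.castSucc) (idx j.succ)) h *
              (U h : Matrix (Fin m) (Fin m) ℂ) (idx (Fin.last (n+1))) (idx 0))]
        rw [Fintype.sum_prod_type]
        refine Finset.sum_comm.trans ?_
        refine Finset.sum_congr rfl fun t _ => Finset.sum_congr rfl fun qf _ => ?_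
        have hc1 : (fun j : Fin (n+1) =>
            e (Fin.cons (α := fun _ => Fin m) t qf j.castSucc)
              (Fin.cons (α := fun _ => Fin m) t qf j.succ))
            = fun j : Fin (n+1) => e (pdef n qf t j) (qf j) :=
          funext fun j => by rw [cons_castSucc, Fin.cons_succ]
        show f (fun j => e (pdef n qf t j) (qf j)) h *
            (U h : Matrix (Fin m) (Fin m) ℂ) (qf (Fin.last n)) t
          = f (fun j : Fin (n+1) =>
              e (Fin.cons (α := fun _ => Fin m) t qf j.castSucc)
                (Fin.cons (α := fun _ => Fin m) t qf j.succ)) h *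
            (U h : Matrix (Fin m) (Fin m) ℂ)
              (Fin.cons (α := fun _ => Fin m) t qf (Fin.last (n+1))) 
              (Fin.cons (α := fun _ => Fin m) t qf 0)
        rw [hc1, Fin.cons_zero, ← Fin.succ_last, Fin.cons_succ]


end

end EquivCyclic
end

section
/- Let (Ω, d, ∫, ρ) be a k-cycle over a complex algebra A. Then the (k+1)-linear functional τ(a^0,…,a^k) = ∫ ρ(a^0) d(ρ(a^1)) ⋯ d(ρ(a^k)) is a cyclic k-cocycle on A: it satisfies τ(a^k, a^0,…,a^{k-1}) = (−1)^k τ(a^0,…,a^k), and bτ = 0, where (bτ)(a^0,…,a^{k+1}) = Σ_{j=0}^{k} (−1)^j τ(a^0,…,a^j a^{j+1},…,a^{k+1}) + (−1)^{k+1} τ(a^{k+1} a^0, a^1,…,a^k). -/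
/-!
Write `xᵢ = ρ(aⁱ) ∈ Ω⁰`. The Leibniz rule on `Ω⁰` gives, by a telescoping induction on `n`
that peels off the last factor, the identity
`∑_{j ≤ n} (-1)ʲ x₀ dx₁ ⋯ d(xⱼ xⱼ₊₁) ⋯ dxₙ₊₁ = (-1)ⁿ x₀ dx₁ ⋯ dxₙ xₙ₊₁`
in `Ω` itself. Integrating it evaluates all but the last term of `bτ` to
`(-1)ᵏ ∫ x₀ dx₁ ⋯ dxₖ xₖ₊₁`; the last term `∫ xₖ₊₁ x₀ dx₁ ⋯ dxₖ` is the same integral by the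
trace property, and it enters `bτ` with the opposite sign.

For cyclicity put `ω = x₀ dx₁ ⋯ dxₖ₋₁`, so that `dω = dx₀ ⋯ dxₖ₋₁` because `d² = 0`.
Closedness gives `∫ xₖ dω = -∫ dxₖ ω`, and the graded trace turns `∫ dxₖ ω` into
`(-1)ᵏ⁻¹ ∫ ω dxₖ = (-1)ᵏ⁻¹ τ(a⁰, …, aᵏ)`.
-/

open scoped BigOperators

namespace CyclicCohomology

/-- A `k`-cycle `(Ω, d, ∫, ρ)` over a complex algebra `A`: a graded complex
algebra `Ω = Ω⁰ ⊕ ⋯ ⊕ Ωᵏ` (realized by submodules `G j` of an ambient algebra,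
with `G j = 0` for `j > k`, so that products of total degree `> k` vanish),
a degree-one differential `d` with `d² = 0` satisfying the graded Leibniz rule,
a closed graded trace `∫ : Ωᵏ → ℂ`, and an algebra homomorphism `ρ : A → Ω⁰`. -/
structure CycleOver (k : ℕ) (A : Type*) [Ring A] [Algebra ℂ A]
    (Ω : Type*) [Ring Ω] [Algebra ℂ Ω] : Type _ where
  /-- the grading `G j = Ω^j` -/
  G : ℕ → Submodule ℂ Ω
  top_eq_bot : ∀ j : ℕ, k < j → G j = ⊥
  mul_mem : ∀ {j j' : ℕ} {x y : Ω}, x ∈ G j → y ∈ G j' → x * y ∈ G (j + j')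
  /-- the differential -/
  d : Ω →ₗ[ℂ] Ω
  d_mem : ∀ {j : ℕ} {x : Ω}, x ∈ G j → d x ∈ G (j + 1)
  d_sq : ∀ x : Ω, d (d x) = 0
  leibniz : ∀ {j : ℕ} {x : Ω}, x ∈ G j → ∀ y : Ω,
    d (x * y) = d x * y + ((-1 : ℂ) ^ j) • (x * d y)
  /-- the graded trace `∫` (only its values on `Ωᵏ` matter) -/
  intg : Ω →ₗ[ℂ] ℂ
  trace : ∀ {j : ℕ} {x y : Ω}, j ≤ k → x ∈ G j → y ∈ G (k - j) →
    intg (x * y) = ((-1 : ℂ) ^ (j * (k - j))) * intg (y * x)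
  closed : ∀ {x : Ω}, x ∈ G (k - 1) → intg (d x) = 0
  /-- the homomorphism `ρ : A → Ω⁰` -/
  ρ : A →ₗ[ℂ] Ω
  ρ_mul : ∀ a b : A, ρ (a * b) = ρ a * ρ b
  ρ_mem : ∀ a : A, ρ a ∈ G 0

noncomputable section

variable {A Ω : Type*} [Ring A] [Algebra ℂ A] [Ring Ω] [Algebra ℂ Ω] {k : ℕ}

/-- The Connes character of a cycle:
`τ(a⁰,…,aᵏ) = ∫ ρ(a⁰) d(ρ(a¹)) ⋯ d(ρ(aᵏ))`. -/
def CycleOver.char (C : CycleOver k A Ω) (a : Fin (k + 1) → A) : ℂ :=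
  C.intg (C.ρ (a 0) * (List.ofFn fun i : Fin k => C.d (C.ρ (a i.succ))).prod)

section Monoid

variable {M : Type*} [Monoid M]

def diffMonomial {n : ℕ} (d : M → M) (x : Fin (n + 1) → M) : M :=
  x 0 * (List.ofFn fun i : Fin n => d (x i.succ)).prod

theorem diffMonomial_eq_init_mul {n : ℕ} (d : M → M) (x : Fin (n + 2) → M) :
    diffMonomial d x = diffMonomial d (Fin.init x) * d (x (Fin.last _)) := by
  simp only [diffMonomial, List.ofFn_succ', List.prod_concat, mul_assoc]
  simp [Fin.init]

end Monoid

section Mul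

variable {M : Type*} [Mul M]

def hochschildFace {n : ℕ} (x : Fin (n + 2) → M) (j : Fin (n + 1)) : Fin (n + 1) → M :=
  fun i =>
    if (i : ℕ) < (j : ℕ) then x i.castSucc
    else if (i : ℕ) = (j : ℕ) then x i.castSucc * x i.succ
    else x i.succ

theorem init_hochschildFace_castSucc {n : ℕ} (x : Fin (n + 3) → M) (j : Fin (n + 1)) :
    Fin.init (hochschildFace x j.castSucc) = hochschildFace (Fin.init x) j := by
  ext i
  simp [hochschildFace, Fin.init]

theorem hochschildFace_castSucc_last {n : ℕ} (x : Fin (n + 3) → M) (j : Fin (n + 1)) :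
    hochschildFace x j.castSucc (Fin.last _) = x (Fin.last _) := by
  have hj := j.isLt
  simp only [hochschildFace, Fin.val_last, Fin.val_castSucc]
  rw [if_neg (by omega), if_neg (by omega)]
  rfl

theorem init_hochschildFace_last {n : ℕ} (x : Fin (n + 2) → M) :
    Fin.init (hochschildFace x (Fin.last n)) = Fin.init (Fin.init x) := by
  ext i
  simp [hochschildFace, Fin.init]

theorem hochschildFace_last_last {n : ℕ} (x : Fin (n + 2) → M) :
    hochschildFace x (Fin.last n) (Fin.last n) = x (Fin.last n).castSucc * x (Fin.last _) := by
  simp [hochschildFace]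

theorem map_hochschildFace {N : Type*} [Mul N] {n : ℕ} (f : M → N)
    (hf : ∀ a b, f (a * b) = f a * f b) (x : Fin (n + 2) → M) (j : Fin (n + 1)) :
    (fun i => f (hochschildFace x j i)) = hochschildFace (fun i => f (x i)) j := by
  ext i
  simp only [hochschildFace]
  split_ifs <;> simp [hf]

end Mul

theorem sum_neg_one_pow_mul_diffMonomial_hochschildFace {R : Type*} [Ring R] (d : R → R) :
    ∀ {n : ℕ} (x : Fin (n + 2) → R),
      (∀ i j, d (x i * x j) = d (x i) * x j + x i * d (x j)) →
      ∑ j : Fin (n + 1), (-1) ^ (j : ℕ) * diffMonomial d (hochschildFace x j) =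
        (-1) ^ n * (diffMonomial d (Fin.init x) * x (Fin.last _))
  | 0, x, _ => by simp [diffMonomial, hochschildFace, Fin.init]
  | n + 1, x, hd => by
    rw [Fin.sum_univ_castSucc]
    have ih := sum_neg_one_pow_mul_diffMonomial_hochschildFace d (Fin.init x) fun i j => hd _ _
    simp only [diffMonomial_eq_init_mul d (hochschildFace x _), init_hochschildFace_castSucc,
      hochschildFace_castSucc_last, ← mul_assoc, ← Finset.sum_mul, ih, init_hochschildFace_last,
      hochschildFace_last_last, hd, Fin.val_castSucc, Fin.val_last,
      diffMonomial_eq_init_mul d (Fin.init x)]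
    simp only [Fin.init, pow_succ]
    noncomm_ring

namespace CycleOver

theorem d_mul_of_mem_zero (C : CycleOver k A Ω) {x : Ω} (hx : x ∈ C.G 0) (y : Ω) :
    C.d (x * y) = C.d x * y + x * C.d y := by
  simpa using C.leibniz hx y

theorem diffMonomial_mem (C : CycleOver k A Ω) :
    ∀ {n : ℕ} (x : Fin (n + 1) → Ω), (∀ i, x i ∈ C.G 0) → diffMonomial C.d x ∈ C.G n
  | 0, x, hx => by simpa [diffMonomial] using hx 0
  | n + 1, x, hx => by
    rw [diffMonomial_eq_init_mul]
    exact C.mul_mem (C.diffMonomial_mem (Fin.init x) fun i => hx _) (C.d_mem (hx _))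

theorem d_diffMonomial (C : CycleOver k A Ω) :
    ∀ {n : ℕ} (x : Fin (n + 1) → Ω), (∀ i, x i ∈ C.G 0) →
      C.d (diffMonomial C.d x) = (List.ofFn fun i => C.d (x i)).prod
  | 0, x, _ => by simp [diffMonomial]
  | n + 1, x, hx => by
    rw [diffMonomial_eq_init_mul, C.leibniz (C.diffMonomial_mem (Fin.init x) fun i => hx _), C.d_sq,
      mul_zero, smul_zero, add_zero, C.d_diffMonomial (Fin.init x) fun i => hx _,
      List.ofFn_succ' fun i => C.d (x i), List.prod_concat]
    rfl

theorem intg_mul_comm_of_mem_zero (C : CycleOver k A Ω) {x y : Ω} (hx : x ∈ C.G 0)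
    (hy : y ∈ C.G k) : C.intg (x * y) = C.intg (y * x) := by
  simpa using C.trace (Nat.zero_le k) hx (by simpa using hy)

theorem intg_mul_d {m : ℕ} (C : CycleOver (m + 1) A Ω) {x ω : Ω} (hx : x ∈ C.G 0)
    (hω : ω ∈ C.G m) : C.intg (x * C.d ω) = (-1) ^ (m + 1) * C.intg (ω * C.d x) := by
  have hStokes := C.closed (by simpa using C.mul_mem hx hω)
  have htrace := C.trace (j := 1) (by omega) (C.d_mem hx) (by simpa using hω)
  rw [C.d_mul_of_mem_zero hx, map_add] at hStokes
  rw [one_mul, Nat.add_sub_cancel] at htrace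
  linear_combination hStokes - htrace

theorem char_rotate {m : ℕ} (C : CycleOver (m + 1) A Ω) (a : Fin (m + 2) → A) :
    C.char (fun i =>
        if (i : ℕ) = 0 then a (Fin.last (m + 1))
        else a ⟨(i : ℕ) - 1, lt_of_le_of_lt (Nat.sub_le _ _) i.isLt⟩) =
      (-1 : ℂ) ^ (m + 1) * C.char a := by
  set x : Fin (m + 2) → Ω := fun i => C.ρ (a i)
  have hx : ∀ i, x i ∈ C.G 0 := fun i => C.ρ_mem (a i)
  have hrotate : C.char (fun i =>
      if (i : ℕ) = 0 then a (Fin.last (m + 1))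
      else a ⟨(i : ℕ) - 1, lt_of_le_of_lt (Nat.sub_le _ _) i.isLt⟩) =
      C.intg (x (Fin.last _) * C.d (diffMonomial C.d (Fin.init x))) := by
    rw [C.d_diffMonomial (Fin.init x) fun i => hx _]
    rfl
  rw [hrotate, C.intg_mul_d (hx _) (C.diffMonomial_mem (Fin.init x) fun i => hx _),
    ← diffMonomial_eq_init_mul]
  rfl

theorem hochschild_coboundary_char_eq_zero (C : CycleOver k A Ω) (a : Fin (k + 2) → A) :
    (∑ j : Fin (k + 1),
        (-1 : ℂ) ^ (j : ℕ) *
          C.char (fun i =>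
              if (i : ℕ) < (j : ℕ) then a i.castSucc
              else if (i : ℕ) = (j : ℕ) then a i.castSucc * a i.succ
              else a i.succ)) +
      (-1 : ℂ) ^ (k + 1) *
        C.char (fun i =>
            if (i : ℕ) = 0 then a (Fin.last (k + 1)) * a 0
            else a i.castSucc) = 0 := by
  set x : Fin (k + 2) → Ω := fun i => C.ρ (a i)
  have hx : ∀ i, x i ∈ C.G 0 := fun i => C.ρ_mem (a i)
  have hsign : ∀ (j : ℕ) (w : Ω), C.intg ((-1) ^ j * w) = (-1) ^ j * C.intg w := fun j w => by
    rw [← smul_eq_mul (a := ((-1 : ℂ) ^ j)), ← map_smul, Algebra.smul_def]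
    simp
  have hfaces := congrArg C.intg <| sum_neg_one_pow_mul_diffMonomial_hochschildFace C.d x
    fun i j => C.d_mul_of_mem_zero (hx i) (x j)
  simp only [map_sum, hsign] at hfaces
  have hlast : C.char (fun i => if (i : ℕ) = 0 then a (Fin.last (k + 1)) * a 0
      else a i.castSucc) = C.intg (diffMonomial C.d (Fin.init x) * x (Fin.last _)) := by
    rw [← C.intg_mul_comm_of_mem_zero (hx _) (C.diffMonomial_mem (Fin.init x) fun i => hx _)]
    simp [CycleOver.char, diffMonomial, x, Fin.init, C.ρ_mul, mul_assoc]
  change ∑ j, _ * C.intg (diffMonomial C.d fun i => C.ρ (hochschildFace a j i)) + _ = 0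
  simp only [map_hochschildFace C.ρ C.ρ_mul]
  rw [hfaces, hlast]
  ring

end CycleOver

/-- the character of a `k`-cycle is a cyclic `k`-cocycle:
`τ(aᵏ, a⁰,…,aᵏ⁻¹) = (−1)ᵏ τ(a⁰,…,aᵏ)` and `bτ = 0`. -/
theorem stmt13 (C : CycleOver k A Ω) :
    (∀ a : Fin (k + 1) → A,
      C.char (fun i =>
          if (i : ℕ) = 0 then a (Fin.last k)
          else a ⟨(i : ℕ) - 1, lt_of_le_of_lt (Nat.sub_le _ _) i.isLt⟩) =
        (-1 : ℂ) ^ k * C.char a)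
    ∧ (∀ a : Fin (k + 2) → A,
      (∑ j : Fin (k + 1),
          (-1 : ℂ) ^ (j : ℕ) *
            C.char (fun i =>
                if (i : ℕ) < (j : ℕ) then a i.castSucc
                else if (i : ℕ) = (j : ℕ) then a i.castSucc * a i.succ
                else a i.succ)) +
        (-1 : ℂ) ^ (k + 1) *
          C.char (fun i =>
              if (i : ℕ) = 0 then a (Fin.last (k + 1)) * a 0
              else a i.castSucc) = 0) := by
  refine ⟨fun a => ?_, C.hochschild_coboundary_char_eq_zero⟩
  cases k with
  | zero => simp [CycleOver.char, show Fin.last 0 = 0 from rfl]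
  | succ m => exact C.char_rotate a

end

end CyclicCohomology
end

section
/- For every homogeneous element T of the algebra (˜Ω, *) obtained by Connes' X-trick from (Ω, d, θ), one has δ(δT) = 0; that is, the X-trick differential δ squares to zero. -/
/-!
Entrywise, `δ(δT)` is a noncommutative polynomial in the entries of `T`, their derivatives, and `θ`.
It vanishes because `d` commutes with multiplication by `θ` on either side (`dθ = 0`), because
`d² = [θ, ·]` cancels the `θ`-terms coming from the off-diagonal part of `δ`, and because the
signs `(−1)^m` and `(−1)^(m+1)` are opposite.
-/

namespace XTrick

/-- The data entering Connes' `X`-trick: a nonnegatively graded unital complex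
algebra `Ω = ⊕_{j≥0} Ω^j` (graded by submodules `G j`, with `G j = 0` for
`j < 0`), a degree-one map `d` satisfying the graded Leibniz rule, and a
curvature `θ ∈ Ω²` with `dθ = 0` and `d²ω = θω − ωθ`. -/
structure XData (Ω : Type*) [Ring Ω] [Algebra ℂ Ω] : Type _ where
  /-- the grading `G j = Ω^j` -/
  G : ℤ → Submodule ℂ Ω
  neg_bot : ∀ j : ℤ, j < 0 → G j = ⊥
  one_mem : (1 : Ω) ∈ G 0
  mul_mem : ∀ {j j' : ℤ} {x y : Ω}, x ∈ G j → y ∈ G j' → x * y ∈ G (j + j')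
  /-- the degree-one map `d` -/
  d : Ω →ₗ[ℂ] Ω
  d_mem : ∀ {j : ℤ} {x : Ω}, x ∈ G j → d x ∈ G (j + 1)
  leibniz : ∀ {j : ℤ} {x : Ω}, x ∈ G j → ∀ y : Ω,
    d (x * y) = d x * y + ((-1 : ℂ) ^ j) • (x * d y)
  /-- the curvature `θ` -/
  theta : Ω
  theta_mem : theta ∈ G 2
  d_theta : d theta = 0
  d_sq : ∀ x : Ω, d (d x) = theta * x - x * theta

noncomputable section

variable {Ω : Type*} [Ring Ω] [Algebra ℂ Ω]

/-- The matrix `Θ = diag(1, θ)`. -/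
def XData.ThetaM (D : XData Ω) : Matrix (Fin 2) (Fin 2) Ω :=
  !![1, 0; 0, D.theta]

/-- The product `T * T' = T Θ T'` on `˜Ω = M₂(Ω)`. -/
def XData.starMul (D : XData Ω) (T T' : Matrix (Fin 2) (Fin 2) Ω) :
    Matrix (Fin 2) (Fin 2) Ω :=
  T * D.ThetaM * T'

/-- `T ∈ ˜Ω` is homogeneous of degree `m`:
`T₁₁ ∈ Ω^m`, `T₁₂, T₂₁ ∈ Ω^{m−1}`, `T₂₂ ∈ Ω^{m−2}`. -/
def XData.Homog (D : XData Ω) (m : ℤ) (T : Matrix (Fin 2) (Fin 2) Ω) : Prop :=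
  T 0 0 ∈ D.G m ∧ T 0 1 ∈ D.G (m - 1) ∧ T 1 0 ∈ D.G (m - 1) ∧ T 1 1 ∈ D.G (m - 2)

/-- The `X`-trick differential `δ` on elements of degree `m`. -/
def XData.deltaOp (D : XData Ω) (m : ℤ) (T : Matrix (Fin 2) (Fin 2) Ω) :
    Matrix (Fin 2) (Fin 2) Ω :=
  !![D.d (T 0 0), D.d (T 0 1); -(D.d (T 1 0)), -(D.d (T 1 1))] +
    !![0, -D.theta; 1, 0] * T +
    ((-1 : ℂ) ^ m) • (T * !![0, 1; -D.theta, 0])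

/-- The functional `Φ(T) = ∫ T₁₁ − (−1)ᵏ ∫ T₂₂ θ` on degree-`k` elements. -/
def XData.Phi (D : XData Ω) (intg : Ω →ₗ[ℂ] ℂ) (k : ℤ)
    (T : Matrix (Fin 2) (Fin 2) Ω) : ℂ :=
  intg (T 0 0) - ((-1 : ℂ) ^ k) * intg (T 1 1 * D.theta)

namespace XData

variable (D : XData Ω)

theorem d_theta_mul (x : Ω) : D.d (D.theta * x) = D.theta * D.d x := by
  simp [D.leibniz D.theta_mem, D.d_theta]

/-- Apply `d` to `d²x = θx − xθ` and compare with `d²(dx) = θ dx − dx θ`. -/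
theorem d_mul_theta (x : Ω) : D.d (x * D.theta) = D.d x * D.theta := by
  have h := D.d_sq (D.d x)
  rw [D.d_sq x, map_sub, d_theta_mul] at h
  exact sub_right_inj.mp h

theorem deltaOp_eq (m : ℤ) (T : Matrix (Fin 2) (Fin 2) Ω) :
    D.deltaOp m T =
      !![D.d (T 0 0) - D.theta * T 1 0 - ((-1 : ℂ) ^ m) • (T 0 1 * D.theta),
         D.d (T 0 1) - D.theta * T 1 1 + ((-1 : ℂ) ^ m) • T 0 0;
         -D.d (T 1 0) + T 0 0 - ((-1 : ℂ) ^ m) • (T 1 1 * D.theta),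
         -D.d (T 1 1) + T 0 1 + ((-1 : ℂ) ^ m) • T 1 0] := by
  rw [deltaOp, Matrix.eta_fin_two T]
  simp [sub_eq_add_neg]

end XData

theorem stmt14_general (D : XData Ω) (m : ℤ) (T : Matrix (Fin 2) (Fin 2) Ω) :
    D.deltaOp (m + 1) (D.deltaOp m T) = 0 := by
  have hsign : ((-1 : ℂ) ^ m = 1 ∧ (-1 : ℂ) ^ (m + 1) = -1) ∨
      ((-1 : ℂ) ^ m = -1 ∧ (-1 : ℂ) ^ (m + 1) = 1) := by
    rcases Int.even_or_odd m with hm | hm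
    · exact .inl ⟨hm.neg_one_zpow, hm.add_one.neg_one_zpow⟩
    · exact .inr ⟨hm.neg_one_zpow, hm.add_one.neg_one_zpow⟩
  rw [D.deltaOp_eq, D.deltaOp_eq]
  rcases hsign with ⟨h0, h1⟩ | ⟨h0, h1⟩ <;>
  · ext i j
    fin_cases i <;> fin_cases j <;>
    · simp only [h0, h1, one_smul, neg_smul, Matrix.of_apply, Matrix.cons_val', Matrix.cons_val_zero,
        Matrix.cons_val_one, Matrix.cons_val_fin_one, Matrix.zero_apply, Fin.zero_eta, Fin.mk_one,
        Fin.isValue, map_add, map_sub, map_neg, D.d_sq, D.d_theta_mul, D.d_mul_theta]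
      noncomm_ring

/-- the `X`-trick differential squares to zero: `δ(δT) = 0`
for every homogeneous `T`. -/
theorem stmt14 (D : XData Ω) (m : ℤ) (T : Matrix (Fin 2) (Fin 2) Ω)
    (hT : D.Homog m T) :
    D.deltaOp (m + 1) (D.deltaOp m T) = 0 :=
  stmt14_general D m T

end

end XTrick
end

section
/- Let A be unital, let n be even, let f be an equivariant cyclic n-cocycle on (A,H) (bf = 0 and λ_H^* f = (−1)^n f), let a ∈ A be H-invariant (h·a = a for all h ∈ H) and nilpotent, set u = exp(a), and let e ∈ A be an H-invariant idempotent (e² = e and h·e = e for all h ∈ H). Then f(u e u^{-1}, u e u^{-1}, …, u e u^{-1} | h) = f(e, e, …, e | h) for every h ∈ H; that is, the pairing value ⟨f, e⟩(h) is invariant under conjugation of e by the H-invariant invertible element u. -/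
open scoped BigOperators

namespace EquivCyclic

noncomputable section

variable {A H : Type*} [Ring A] [Algebra ℂ A] [Group H]

variable {m : ℕ}

/-!
The conjugates `e_t = exp(t a) e exp(-t a)` form a path of `H`-invariant idempotents from `e` to
`u e u⁻¹`, polynomial in `t ∈ ℂ`. By multilinearity, `t ↦ f(e_t, …, e_t | h)` is differentiable
with derivative `Σᵢ f(e_t, …, a e_t - e_t a, …, e_t | h)`. Cyclicity moves the commutator to the
first slot, and `bf = 0` evaluated at `(x, w, …, w)` gives `f(x w, w, …, w | h) = f(w x, w, …, w | h)`
for every invariant idempotent `w`: the faces merging two copies of `w` cancel in pairs because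
`n` is even. Hence the derivative vanishes and the function is constant.
-/

open Polynomial Finset

section Action

variable {act : H → A → A}

theorem IsAlgAction.act_one (hact : IsAlgAction act) (g : H) : act g 1 = 1 := by
  have hinv : act g (act g⁻¹ 1) = 1 := by rw [← hact.2.1, mul_inv_cancel, hact.1]
  calc act g 1 = act g 1 * act g (act g⁻¹ 1) := by rw [hinv, mul_one]
    _ = 1 := by rw [← hact.2.2.2.1, one_mul, hinv]

def IsAlgAction.toAlgHom (hact : IsAlgAction act) (g : H) : A →ₐ[ℂ] A :=
  AlgHom.ofLinearMap ⟨⟨act g, hact.2.2.1 g⟩, hact.2.2.2.2 g⟩ (hact.act_one g) (hact.2.2.2.1 g)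

@[simp] theorem IsAlgAction.toAlgHom_apply (hact : IsAlgAction act) (g : H) (x : A) :
    hact.toAlgHom g x = act g x := rfl

end Action

theorem map_expNil {B : Type*} [Ring B] [Algebra ℂ B] (φ : A →ₐ[ℂ] B) (x : A) (N : ℕ) :
    φ (expNil x N) = expNil (φ x) N := by
  simp [expNil, map_sum, map_smul, map_pow]

theorem expNil_mul_expNil_neg {x : A} {N : ℕ} (hx : x ^ N = 0) :
    expNil x N * expNil (-x) N = 1 := by
  -- `IsNilpotent.exp` lives on `ℚ`-modules; restricting scalars along `ℚ → ℂ` matches `expNil`.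
  let _ : Module ℚ A := Module.compHom A (algebraMap ℚ ℂ)
  have hexp : ∀ y : A, y ^ N = 0 → expNil y N = IsNilpotent.exp y := fun y hy => by
    rw [IsNilpotent.exp_eq_sum hy, expNil]
    refine sum_congr rfl fun k _ => ?_
    show _ = (algebraMap ℚ ℂ (k.factorial : ℚ)⁻¹) • y ^ k
    simp
  rw [hexp x hx, hexp (-x) (by rw [neg_pow, hx, mul_zero]),
    IsNilpotent.exp_mul_exp_neg_self ⟨N, hx⟩]

theorem expNil_neg_mul_expNil {x : A} {N : ℕ} (hx : x ^ N = 0) :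
    expNil (-x) N * expNil x N = 1 := by
  simpa using expNil_mul_expNil_neg (x := -x) (by rw [neg_pow, hx, mul_zero])

theorem Ring.inverse_expNil {x : A} {N : ℕ} (hx : x ^ N = 0) :
    Ring.inverse (expNil x N) = expNil (-x) N :=
  Ring.inverse_unit ⟨_, _, expNil_mul_expNil_neg hx, expNil_neg_mul_expNil hx⟩

theorem expNil_zero {N : ℕ} (hN : (0 : A) ^ N = 0) : expNil (0 : A) N = 1 := by
  cases N with
  | zero =>
    have : Subsingleton A := subsingleton_of_zero_eq_one (by simpa using hN.symm)
    exact Subsingleton.elim _ _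
  | succ N => simp [expNil, sum_range_succ']

def scalarEval (t : ℂ) : A[X] →+* A :=
  eval₂RingHom' (RingHom.id A) (algebraMap ℂ A t) fun c => (Algebra.commutes t c).symm

theorem scalarEval_C (t : ℂ) (c : A) : scalarEval t (C c) = c := eval₂_C _ _

theorem scalarEval_monomial (t : ℂ) (k : ℕ) (c : A) :
    scalarEval t (monomial k c) = t ^ k • c := by
  show eval₂ _ _ _ = _
  rw [eval₂_monomial, RingHom.id_apply, ← map_pow,
    ← Algebra.commutes, ← Algebra.smul_def]

theorem scalarEval_eq_sum (t : ℂ) (p : A[X]) :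
    scalarEval t p = ∑ k ∈ p.support, t ^ k • p.coeff k := by
  conv_lhs => rw [p.as_sum_support]
  simp only [map_sum, scalarEval_monomial]

theorem continuous_multilinearMap_scalarEval {ι : Type*} [Fintype ι] [DecidableEq ι]
    (F : MultilinearMap ℂ (fun _ : ι => A) ℂ) (P : ι → A[X]) :
    Continuous fun t : ℂ => F fun i => scalarEval t (P i) := by
  simp only [scalarEval_eq_sum, F.map_sum_finset, F.map_smul_univ, smul_eq_mul]
  fun_prop

theorem exists_scalarEval_sub_eq_smul (p : A[X]) (s : ℂ) :
    ∃ q : A[X], (∀ t, scalarEval t p - scalarEval s p = (t - s) • scalarEval t q) ∧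
      scalarEval s q = scalarEval s (derivative p) := by
  induction p using Polynomial.induction_on' with
  | add p₁ p₂ ih₁ ih₂ =>
    obtain ⟨q₁, hq₁, hd₁⟩ := ih₁
    obtain ⟨q₂, hq₂, hd₂⟩ := ih₂
    refine ⟨q₁ + q₂, fun t => ?_, by simp only [map_add, hd₁, hd₂]⟩
    rw [map_add, map_add, map_add, smul_add, ← hq₁, ← hq₂]
    abel
  | monomial k c =>
    refine ⟨∑ j ∈ range k, monomial j (s ^ (k - 1 - j) • c), fun t => ?_, ?_⟩
    · simp only [map_sum, scalarEval_monomial, smul_smul, ← sum_smul, ← sub_smul]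
      rw [mul_comm, geom_sum₂_mul]
    · have hpow : ∀ j ∈ range k, s ^ j * s ^ (k - 1 - j) = s ^ (k - 1) := fun j hj => by
        rw [← pow_add]; congr 1; have := mem_range.1 hj; omega
      simp only [map_sum, scalarEval_monomial, derivative_monomial, smul_smul, ← sum_smul]
      rw [sum_congr rfl hpow, sum_const, card_range, nsmul_eq_mul, mul_comm, mul_smul,
        ← Nat.cast_comm, ← nsmul_eq_mul, Nat.cast_smul_eq_nsmul]

theorem hasDerivAt_of_sub_eq_smul {𝕜 F : Type*} [NontriviallyNormedField 𝕜]
    [NormedAddCommGroup F] [NormedSpace 𝕜 F] {g r : 𝕜 → F} {s : 𝕜}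
    (hg : ∀ t, g t - g s = (t - s) • r t) (hr : ContinuousAt r s) : HasDerivAt g (r s) s := by
  rw [hasDerivAt_iff_tendsto_slope]
  refine (hr.tendsto.mono_left nhdsWithin_le_nhds).congr' ?_
  filter_upwards [self_mem_nhdsWithin] with t (ht : t ≠ s)
  rw [slope_def_module, hg, smul_smul, inv_mul_cancel₀ (sub_ne_zero.2 ht), one_smul]

theorem hasDerivAt_multilinearMap_scalarEval {ι : Type*} [Fintype ι] [LinearOrder ι]
    (F : MultilinearMap ℂ (fun _ : ι => A) ℂ) (P : ι → A[X]) (s : ℂ) :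
    HasDerivAt (fun t => F fun i => scalarEval t (P i))
      (∑ i, F (Function.update (fun j => scalarEval s (P j)) i
        (scalarEval s (derivative (P i))))) s := by
  choose q hq hqs using fun i => exists_scalarEval_sub_eq_smul (P i) s
  -- `Q i` are the arguments of the `i`-th term of the telescoped difference `F (P t) - F (P s)`,
  -- with the difference quotient of `P i` in slot `i`.
  let Q (i j : ι) : A[X] := if j < i then P j else if i = j then q i else C (scalarEval s (P j))
  have hslope : ∀ t, (F fun i => scalarEval t (P i)) - (F fun i => scalarEval s (P i)) =
      (t - s) • ∑ i, F fun j => scalarEval t (Q i j) := by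
    intro t
    rw [← piecewise_univ (fun i => scalarEval s (P i)) (fun i => scalarEval t (P i)),
      F.map_sub_map_piecewise, smul_sum]
    refine sum_congr rfl fun i _ => ?_
    have hslot : (fun j => if j ∈ univ → j < i then scalarEval t (P j) else
        if i = j then scalarEval t (P j) - scalarEval s (P j) else scalarEval s (P j)) =
        Function.update (fun j => scalarEval t (Q i j)) i ((t - s) • scalarEval t (q i)) := by
      funext j
      rcases lt_trichotomy j i with hji | rfl | hij
      · simp [Q, hji, hji.ne]
      · simp [hq]
      · simp [Q, hij.ne, hij.not_gt, Function.update_of_ne hij.ne', scalarEval_C]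
    rw [hslot, F.map_update_smul, Function.update_eq_self_iff.2 (by simp [Q])]
  have hdiag : (∑ i, F (Function.update (fun j => scalarEval s (P j)) i
      (scalarEval s (derivative (P i))))) = ∑ i, F fun j => scalarEval s (Q i j) := by
    refine sum_congr rfl fun i _ => congrArg F (funext fun j => ?_)
    rcases lt_trichotomy j i with hji | rfl | hij
    · simp [Q, hji, hji.ne]
    · simp [Q, hqs]
    · simp [Q, hij.ne, hij.not_gt, Function.update_of_ne hij.ne', scalarEval_C]
  rw [hdiag]
  exact hasDerivAt_of_sub_eq_smul hslope
    (continuous_finsetSum _ fun i _ => continuous_multilinearMap_scalarEval F (Q i)).continuousAt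

def expPoly (N : ℕ) (x : A) : A[X] :=
  ∑ k ∈ range N, monomial k ((k.factorial : ℂ)⁻¹ • x ^ k)

theorem scalarEval_expPoly (t : ℂ) (N : ℕ) (x : A) :
    scalarEval t (expPoly N x) = expNil (t • x) N := by
  simp only [expPoly, expNil, map_sum, scalarEval_monomial, _root_.smul_pow, smul_comm (t ^ _)]

theorem C_mul_expPoly (N : ℕ) (x : A) : C x * expPoly N x = expPoly N x * C x := by
  simp only [expPoly, mul_sum, sum_mul, C_mul_monomial, monomial_mul_C, mul_smul_comm,
    smul_mul_assoc, ← pow_succ, ← pow_succ']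

theorem derivative_expPoly {N : ℕ} {x : A} (hx : x ^ N = 0) :
    derivative (expPoly N x) = C x * expPoly N x := by
  cases N with
  | zero => simp [expPoly]
  | succ N =>
    have hterm (k : ℕ) : derivative (monomial (k + 1) (((k + 1).factorial : ℂ)⁻¹ • x ^ (k + 1))) =
        C x * monomial k ((k.factorial : ℂ)⁻¹ • x ^ k) := by
      rw [derivative_monomial, C_mul_monomial, Nat.add_sub_cancel, ← Nat.cast_comm,
        ← nsmul_eq_mul, ← Nat.cast_smul_eq_nsmul ℂ, smul_smul, mul_smul_comm, ← pow_succ']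
      congr 2
      push_cast [Nat.factorial_succ]
      field_simp
    rw [expPoly, map_sum, sum_range_succ', mul_sum, sum_range_succ]
    simp only [hterm, C_mul_monomial, mul_smul_comm, ← pow_succ', hx, smul_zero, map_zero,
      add_zero, derivative_monomial, Nat.cast_zero, mul_zero]

def conjPoly (N : ℕ) (a e : A) : A[X] := expPoly N a * C e * expPoly N (-a)

theorem scalarEval_conjPoly (t : ℂ) (N : ℕ) (a e : A) :
    scalarEval t (conjPoly N a e) = expNil (t • a) N * e * expNil (-(t • a)) N := by
  simp only [conjPoly, map_mul, scalarEval_expPoly, scalarEval_C, smul_neg]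

theorem derivative_conjPoly {N : ℕ} {a : A} (ha : a ^ N = 0) (e : A) :
    derivative (conjPoly N a e) = C a * conjPoly N a e - conjPoly N a e * C a := by
  have ha' : (-a) ^ N = 0 := by rw [neg_pow, ha, mul_zero]
  have hcomm : C a * expPoly N (-a) = expPoly N (-a) * C a := by
    simpa using C_mul_expPoly N (-a)
  simp only [conjPoly, derivative_mul, derivative_C, mul_zero, add_zero, derivative_expPoly ha,
    derivative_expPoly ha', map_neg, neg_mul, hcomm]
  noncomm_ring

theorem IsIdempotentElem.mul_mul_of_mul_eq_one {M : Type*} [Monoid M] {u v e : M}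
    (he : IsIdempotentElem e) (hvu : v * u = 1) : IsIdempotentElem (u * e * v) := by
  rw [IsIdempotentElem]
  simp only [mul_assoc]
  rw [← mul_assoc v u, hvu, one_mul, ← mul_assoc e e, he.eq]

theorem isIdempotentElem_scalarEval_conjPoly {N : ℕ} {a e : A} (ha : a ^ N = 0)
    (he : IsIdempotentElem e) (t : ℂ) : IsIdempotentElem (scalarEval t (conjPoly N a e)) := by
  rw [scalarEval_conjPoly]
  refine IsIdempotentElem.mul_mul_of_mul_eq_one he (expNil_neg_mul_expNil ?_)
  rw [_root_.smul_pow, ha, smul_zero]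

theorem map_scalarEval_conjPoly (φ : A →ₐ[ℂ] A) (t : ℂ) (N : ℕ) (a e : A) :
    φ (scalarEval t (conjPoly N a e)) = scalarEval t (conjPoly N (φ a) (φ e)) := by
  simp only [scalarEval_conjPoly, map_mul, map_expNil, map_neg, map_smul]

theorem scalarEval_one_conjPoly {N : ℕ} {a : A} (ha : a ^ N = 0) (e : A) :
    scalarEval 1 (conjPoly N a e) = expNil a N * e * Ring.inverse (expNil a N) := by
  rw [scalarEval_conjPoly, one_smul, Ring.inverse_expNil ha]

theorem scalarEval_zero_conjPoly {N : ℕ} {a : A} (ha : a ^ N = 0) (e : A) :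
    scalarEval 0 (conjPoly N a e) = e := by
  have h0 : (0 : A) ^ N = 0 := by
    simpa using (show ((0 : ℂ) • a) ^ N = 0 by rw [_root_.smul_pow, ha, smul_zero])
  rw [scalarEval_conjPoly, zero_smul, neg_zero, expNil_zero h0, one_mul, mul_one]

theorem IsCyclic.apply_update_succ {M : Type*} {act : H → M → M} {n : ℕ} {f : Cochain M H n}
    (hn : Even n) (hcyc : IsCyclic act n f) {h : H} {w : M} (hw : act h⁻¹ w = w) (j : Fin n)
    (y : M) :
    f (Function.update (fun _ => w) j.succ y) h =
      f (Function.update (fun _ => w) j.castSucc y) h := by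
  have hrot := congrFun (congrFun hcyc (Function.update (fun _ => w) j.castSucc y)) h
  rw [Pi.smul_apply, Pi.smul_apply, hn.neg_one_pow, one_smul] at hrot
  rw [← hrot, lamOp]
  congr 1
  funext i
  simp only [Function.update_apply, Fin.ext_iff, Fin.val_succ, Fin.val_castSucc, Fin.val_last]
  split_ifs <;> first | rfl | omega | exact hw.symm

theorem IsCyclic.apply_update_eq_apply_update_zero {M : Type*} {act : H → M → M} {n : ℕ}
    {f : Cochain M H n} (hn : Even n) (hcyc : IsCyclic act n f) {h : H} {w : M}
    (hw : act h⁻¹ w = w) (i : Fin (n + 1)) (y : M) :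
    f (Function.update (fun _ => w) i y) h = f (Function.update (fun _ => w) 0 y) h := by
  induction i using Fin.induction with
  | zero => rfl
  | succ j ih => rw [hcyc.apply_update_succ hn hw, ih]

theorem apply_update_zero_mul_comm_of_bOp_eq_zero {R : Type*} [Ring R] {act : H → R → R} {n : ℕ}
    {f : Cochain R H n} (hn : Even n) (hcoc : bOp act n f = 0) {h : H} {w : R}
    (hww : IsIdempotentElem w) (hw : act h⁻¹ w = w) (x : R) :
    f (Function.update (fun _ => w) 0 (x * w)) h =
      f (Function.update (fun _ => w) 0 (w * x)) h := by
  set v : Fin (n + 2) → R := Function.update (fun _ => w) 0 x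
  have hface (j : Fin (n + 1)) : (fun i : Fin (n + 1) => if (i : ℕ) < j then v i.castSucc
      else if (i : ℕ) = j then v i.castSucc * v i.succ else v i.succ) =
      Function.update (fun _ => w) 0 (if j = 0 then x * w else x) := by
    funext i
    simp only [v, Function.update_apply, Fin.ext_iff, Fin.val_succ, Fin.val_castSucc,
      Fin.val_zero, Nat.add_one_ne_zero, if_false]
    split_ifs <;> first | exact hww | rfl | omega
  have hlast : (fun i : Fin (n + 1) => if (i : ℕ) = 0
      then act h⁻¹ (v (Fin.last (n + 1))) * v 0 else v i.castSucc) =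
      Function.update (fun _ => w) 0 (w * x) := by
    funext i
    simp only [v, Function.update_apply, Fin.ext_iff, Fin.val_castSucc, Fin.val_last,
      Fin.val_zero, Nat.add_one_ne_zero, if_false]
    split_ifs <;> first | rfl | omega | rw [hw]
  have hsign : ∑ k : Fin n, (-1 : ℂ) ^ (k.succ : ℕ) = 0 := by
    simp only [Fin.val_succ, pow_succ, ← sum_mul, Fin.sum_univ_eq_sum_range (fun k => (-1 : ℂ) ^ k),
      neg_one_geom_sum, if_pos hn, zero_mul]
  have hb := congrFun (congrFun hcoc v) h
  simp only [bOp, bPrime, hface, hlast, Fin.sum_univ_succ, Fin.succ_ne_zero, if_true, if_false,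
    ← sum_mul, hsign, (hn.add_one).neg_one_pow, Pi.zero_apply, Fin.val_zero, pow_zero, one_mul,
    zero_mul, add_zero] at hb
  linear_combination hb

def IsMultilinear.toMultilinearMap {n : ℕ} {f : Cochain A H n} (hf : IsMultilinear n f)
    (h : H) : MultilinearMap ℂ (fun _ : Fin (n + 1) => A) ℂ where
  toFun v := f v h
  map_update_add' := by
    intro _ v i x y
    convert (hf v i h).1 x y
  map_update_smul' := by
    intro _ v i c x
    rw [smul_eq_mul]
    convert (hf v i h).2 c x

theorem deltaStar_const_eq_zero {act : H → A → A} {n : ℕ} {f : Cochain A H n} (hn : Even n)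
    (hf : IsMultilinear n f) (hcyc : IsCyclic act n f) (hcoc : bOp act n f = 0) {h : H}
    {w : A} (hww : IsIdempotentElem w) (hw : act h⁻¹ w = w) (x : A) :
    deltaStar n x f (fun _ => w) h = 0 := by
  refine sum_eq_zero fun i _ => ?_
  have hsub := (hf.toMultilinearMap h).map_update_sub (fun _ => w) 0 (x * w) (w * x)
  rw [hcyc.apply_update_eq_apply_update_zero hn hw, show f _ h = _ from hsub]
  exact sub_eq_zero.2 (apply_update_zero_mul_comm_of_bOp_eq_zero hn hcoc hww hw x)

theorem hasDerivAt_apply_scalarEval_conjPoly {G : Type*} {n N : ℕ} {f : Cochain A G n}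
    (hf : IsMultilinear n f) (h : G) {a : A} (ha : a ^ N = 0) (e : A) (s : ℂ) :
    HasDerivAt (fun t => f (fun _ => scalarEval t (conjPoly N a e)) h)
      (deltaStar n a f (fun _ => scalarEval s (conjPoly N a e)) h) s := by
  have := hasDerivAt_multilinearMap_scalarEval (hf.toMultilinearMap h)
    (fun _ => conjPoly N a e) s
  simp only [derivative_conjPoly ha e, map_sub, map_mul, scalarEval_C] at this
  exact this

/-- for `n` even, `f` an equivariant cyclic `n`-cocycle, `a` an
`H`-invariant nilpotent, `u = exp(a)` and `e` an `H`-invariant idempotent,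
`f(ueu⁻¹, …, ueu⁻¹|h) = f(e, …, e|h)` for every `h ∈ H`. -/
theorem stmt19 {A H : Type*} [Ring A] [Algebra ℂ A] [Group H]
    (act : H → A → A) (hact : IsAlgAction act)
    (n : ℕ) (hn : Even n) (f : Cochain A H n)
    (hf : IsEquivCochain act n f) (hcyc : IsCyclic act n f)
    (hcoc : bOp act n f = 0)
    (a : A) (hainv : ∀ h : H, act h a = a) (N : ℕ) (hN : a ^ N = 0)
    (e : A) (he : e * e = e) (heinv : ∀ h : H, act h e = e) :
    ∀ h : H,
      f (fun _ => expNil a N * e * Ring.inverse (expNil a N)) h =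
        f (fun _ => e) h := by
  intro h
  have hderiv (s : ℂ) :
      HasDerivAt (fun t => f (fun _ => scalarEval t (conjPoly N a e)) h) 0 s := by
    have hinv : act h⁻¹ (scalarEval s (conjPoly N a e)) = scalarEval s (conjPoly N a e) := by
      rw [← hact.toAlgHom_apply, map_scalarEval_conjPoly, hact.toAlgHom_apply,
        hact.toAlgHom_apply, hainv, heinv]
    rw [← deltaStar_const_eq_zero hn hf.1 hcyc hcoc
      (isIdempotentElem_scalarEval_conjPoly hN he s) hinv a]
    exact hasDerivAt_apply_scalarEval_conjPoly hf.1 h hN e s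
  have hconst := is_const_of_deriv_eq_zero (fun s => (hderiv s).differentiableAt)
    (fun s => (hderiv s).deriv) 1 0
  rwa [scalarEval_one_conjPoly hN, scalarEval_zero_conjPoly hN] at hconst

end

end EquivCyclic
end
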